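/- arXiv:2210.02233 — 6 statements merged into one kernel-verified Lean document; each statement's English description precedes it below -/
import Mathlib

section
/- Let R ⊆ ℕ be a sublacunary good set and let S ⊆ R be a good set with positive relative upper density in R, i.e. ‖S‖_{1,R} > 0. Then for every irrational β the limit measure μ_{S,β} is absolutely continuous with respect to μ_{R,β}, and the Radon–Nikodym derivative ρ_β = dμ_{S,β}/dμ_{R,β} satisfies ‖ρ_β‖_{L^∞(μ_{R,β})} ≤ 1/‖S‖_{1,R}. -/
open MeasureTheory Filter Topology
open scoped BigOperators

noncomputable section

open Classical in
/-- `S(N) = S ∩ {1,…,N}` as a `Finset`. -/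
def initSeg (S : Set ℕ) (N : ℕ) : Finset ℕ := (Finset.Icc 1 N).filter (· ∈ S)

/-- The average `(1/#S(N)) ∑_{s ∈ S(N)} f (sα mod 1)`. -/
def empAvg (S : Set ℕ) (α : ℝ) (N : ℕ) (f : UnitAddCircle → ℝ) : ℝ :=
  ((initSeg S N).card : ℝ)⁻¹ * ∑ s ∈ initSeg S N, f (((s : ℝ) * α : ℝ) : UnitAddCircle)

/-- `μ` is the weak limit of the empirical measures `(1/#S(N)) ∑_{s ∈ S(N)} δ_{sα mod 1}`. -/
def IsLimitMeasure (S : Set ℕ) (α : ℝ) (μ : Measure UnitAddCircle) : Prop :=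
  ∀ f : C(UnitAddCircle, ℝ),
    Tendsto (fun N => empAvg S α N (fun x => f x)) atTop (𝓝 (∫ x, f x ∂μ))

/-- A good set: infinite, and for every `α` the empirical measures converge weakly
to some (probability) limit measure `μ_{S,α}`. -/
def IsGoodSet (S : Set ℕ) : Prop :=
  S.Infinite ∧ ∀ α : ℝ, ∃ μ : Measure UnitAddCircle, IsProbabilityMeasure μ ∧ IsLimitMeasure S α μ

/-- `R` is sublacunary: `log N / #R(N) → 0`. -/
def Sublacunary (R : Set ℕ) : Prop :=
  Tendsto (fun N : ℕ => Real.log N / ((initSeg R N).card : ℝ)) atTop (𝓝 0)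

open Classical in
/-- `#{n < N : r_n ∈ S}` where `(r_n)` is the increasing (0-indexed) enumeration of `R`. -/
def relCount (R S : Set ℕ) (N : ℕ) : ℕ :=
  ((Finset.range N).filter (fun n => Nat.nth (· ∈ R) n ∈ S)).card

/-- Weighted average `(1/∑_{n<N} w n) ∑_{n<N} w n · f (r_n β mod 1)`. -/
def wAvg (R : Set ℕ) (w : ℕ → ℝ) (β : ℝ) (N : ℕ) (f : UnitAddCircle → ℝ) : ℝ :=
  (∑ n ∈ Finset.range N, w n)⁻¹ *
    ∑ n ∈ Finset.range N, w n * f (((Nat.nth (· ∈ R) n : ℝ) * β : ℝ) : UnitAddCircle)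

/-- `μ` is the weak limit of the `w`-weighted empirical measures along `R` at `β`. -/
def IsWeightLimit (R : Set ℕ) (w : ℕ → ℝ) (β : ℝ) (μ : Measure UnitAddCircle) : Prop :=
  ∀ f : C(UnitAddCircle, ℝ),
    Tendsto (fun N => wAvg R w β N (fun x => f x)) atTop (𝓝 (∫ x, f x ∂μ))

/-- A good weight on `R` (indexed by the increasing enumeration of `R`). -/
def IsGoodWeight (R : Set ℕ) (w : ℕ → ℝ) : Prop :=
  (∀ n, 0 ≤ w n) ∧ ¬ Summable w ∧
    ∀ β : ℝ, ∃ μ : Measure UnitAddCircle, IsProbabilityMeasure μ ∧ IsWeightLimit R w β μ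

/-- Besicovitch-type seminorm `‖f‖₁ = limsup_N (1/N) ∑_{n<N} |f n|`. -/
def besic (f : ℕ → ℝ) : ℝ := Filter.limsup (fun N => (∑ n ∈ Finset.range N, |f n|) / N) atTop

/-- An integrable weight: approximable in `‖·‖₁` by bounded good weights. -/
def IntegrableWeight (R : Set ℕ) (w : ℕ → ℝ) : Prop :=
  ∀ ε > 0, ∃ v : ℕ → ℝ, IsGoodWeight R v ∧ (∃ C, ∀ n, v n ≤ C) ∧
    besic (fun n => v n - w n) < ε

/-- Total variation distance between two finite Borel measures on the torus. -/
def varDist (μ ν : Measure UnitAddCircle) : ℝ :=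
  ⨆ B : Set UnitAddCircle, ⨆ _ : MeasurableSet B, |(μ B).toReal - (ν B).toReal|

/-- `e(θ) = exp(2πiθ)`. -/
def eC (θ : ℝ) : ℂ := Complex.exp (2 * Real.pi * Complex.I * θ)

/-- `w(R(N)) = ∑_{r ∈ R(N)} w r`. -/
def wSum (R : Set ℕ) (w : ℕ → ℝ) (N : ℕ) : ℝ := ∑ r ∈ initSeg R N, w r

/-- `μ` is the weak limit of `(1/w(R(N))) ∑_{r ∈ R(N)} w r · δ_{rβ mod 1}`. -/
def IsWeightLimitR (R : Set ℕ) (w : ℕ → ℝ) (β : ℝ) (μ : Measure UnitAddCircle) : Prop :=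
  ∀ f : C(UnitAddCircle, ℝ),
    Tendsto
      (fun N => (wSum R w N)⁻¹ * ∑ r ∈ initSeg R N, w r * f (((r : ℝ) * β : ℝ) : UnitAddCircle))
      atTop (𝓝 (∫ x, f x ∂μ))

/-- `f : ℕ → ℂ` has mean `c`. -/
def HasMean (f : ℕ → ℂ) (c : ℂ) : Prop :=
  Tendsto (fun N => (∑ n ∈ Finset.range N, f n) / (N : ℂ)) atTop (𝓝 c)

/-- The seminorm `‖f‖_M = limsup_N |(1/N) ∑_{n<N} f n|`. -/
def meanSeminorm (f : ℕ → ℂ) : ℝ :=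
  Filter.limsup (fun N => ‖(∑ n ∈ Finset.range N, f n) / (N : ℂ)‖) atTop

end

/-!
Write `r₀ < r₁ < ⋯` for the elements of `R` and put `m = rₙ`. For continuous `f ≥ 0`, the sum of
`f (sβ)` over `S(m)` is at most the sum over `R(m)` because `S ⊆ R`, while `#R(m) ≤ n + 1` and
`#S(m) ≥ #{k ≤ n : r_k ∈ S} - 1`. Dividing by `n + 1` and letting `n → ∞` along indices where the
relative density of `S` in `R` is close to its upper limit `d` gives
`d ∫ f dμ_S ≤ ∫ f dμ_R`. By regularity this is the measure inequality `μ_S ≤ d⁻¹ μ_R`, which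
gives both the absolute continuity and the bound on the Radon–Nikodym derivative.
-/

open scoped NNReal ENNReal BoundedContinuousFunction

namespace MeasureTheory.Measure

theorem rnDeriv_le_of_le_smul {X : Type*} [MeasurableSpace X] {μ ν : Measure X}
    [IsFiniteMeasure μ] [SigmaFinite ν] {c : ℝ≥0} (h : μ ≤ c • ν) :
    ∀ᵐ x ∂ν, μ.rnDeriv ν x ≤ c := by
  rcases eq_or_ne c 0 with rfl | hc
  · obtain rfl : μ = 0 := le_antisymm (by simpa using h) (Measure.zero_le μ)
    filter_upwards [rnDeriv_zero ν] with x hx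
    simp [hx]
  have hle : c⁻¹ • μ ≤ ν :=
    calc c⁻¹ • μ ≤ c⁻¹ • c • ν := by gcongr
      _ = ν := by rw [smul_smul, inv_mul_cancel₀ hc, one_smul]
  filter_upwards [rnDeriv_le_one_of_le hle, rnDeriv_smul_left μ ν c⁻¹] with x hx hx'
  rwa [hx', Pi.smul_apply, Pi.one_apply, ENNReal.smul_def, smul_eq_mul, ENNReal.coe_inv hc,
    ENNReal.inv_mul_le_iff (by simpa using hc) ENNReal.coe_ne_top, mul_one] at hx

variable {X : Type*} [TopologicalSpace X] [TopologicalSpace.PseudoMetrizableSpace X]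
  [MeasurableSpace X] [BorelSpace X] {μ ν : Measure X} [IsFiniteMeasure μ] [IsFiniteMeasure ν]
  {c : ℝ≥0}

theorem le_smul_of_forall_lintegral_le
    (h : ∀ f : X →ᵇ ℝ≥0, ∫⁻ x, f x ∂μ ≤ c * ∫⁻ x, f x ∂ν) : μ ≤ c • ν := by
  have closed : ∀ F, IsClosed F → μ F ≤ c • ν F := fun F hF =>
    le_of_tendsto_of_tendsto' (HasOuterApproxClosed.tendsto_lintegral_apprSeq hF μ)
      (ENNReal.Tendsto.const_mul (HasOuterApproxClosed.tendsto_lintegral_apprSeq hF ν)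
        (Or.inr ENNReal.coe_ne_top)) fun n => h _
  refine le_iff.2 fun s hs => ?_
  rw [hs.measure_eq_iSup_isClosed_of_ne_top (measure_ne_top μ s)]
  exact iSup₂_le fun F hFs => iSup_le fun hF => (closed F hF).trans (measure_mono hFs)

theorem le_smul_of_forall_integral_le
    (h : ∀ f : C(X, ℝ), (∀ x, 0 ≤ f x) → ∫ x, f x ∂μ ≤ c * ∫ x, f x ∂ν) : μ ≤ c • ν := by
  refine le_smul_of_forall_lintegral_le fun f => ?_
  have hf := h ⟨fun x => f x, by fun_prop⟩ fun x => (f x).2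
  rw [lintegral_coe_eq_integral _ (BoundedContinuousFunction.integrable_of_nnreal μ f),
    lintegral_coe_eq_integral _ (BoundedContinuousFunction.integrable_of_nnreal ν f),
    ← ENNReal.ofReal_coe_nnreal, ← ENNReal.ofReal_mul c.coe_nonneg]
  exact ENNReal.ofReal_le_ofReal hf

end MeasureTheory.Measure

theorem limsup_mul_le_of_forall_mul_le {ι : Type*} {l : Filter ι} [l.NeBot] {x a b : ι → ℝ}
    {A B : ℝ} (hx : ∀ i, 0 ≤ x i) (ha : ∀ i, 0 ≤ a i) (haA : Tendsto a l (𝓝 A))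
    (hbB : Tendsto b l (𝓝 B)) (hle : ∀ i, x i * a i ≤ b i) : limsup x l * A ≤ B := by
  have hcobdd : IsCoboundedUnder (· ≤ ·) l x :=
    (isBoundedUnder_of ⟨0, hx⟩).isCoboundedUnder_flip
  have below : ∀ c < limsup x l, c * A ≤ B := fun c hc => by
    have hfreq : ∃ᶠ i in l, (c * a i, b i) ∈ {p : ℝ × ℝ | p.1 ≤ p.2} :=
      (frequently_lt_of_lt_limsup hcobdd hc).mono fun i hi =>
        (mul_le_mul_of_nonneg_right hi.le (ha i)).trans (hle i)
    exact isClosed_le continuous_fst continuous_snd |>.mem_of_frequently_of_tendsto hfreq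
      ((haA.const_mul c).prodMk_nhds hbB)
  exact le_of_tendsto ((continuous_mul_const A).continuousWithinAt (s := Set.Iio (limsup x l)))
    (eventually_nhdsWithin_of_forall below)

theorem initSeg_mono {S R : Set ℕ} (h : S ⊆ R) (N : ℕ) : initSeg S N ⊆ initSeg R N := by
  classical
  exact Finset.monotone_filter_right _ fun _ _ hx => h hx

theorem card_initSeg_nth_le {R : Set ℕ} (hR : R.Infinite) (n : ℕ) :
    (initSeg R (Nat.nth (· ∈ R) n)).card ≤ n + 1 := by
  classical
  calc (initSeg R (Nat.nth (· ∈ R) n)).card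
      ≤ ((Finset.range (Nat.nth (· ∈ R) n + 1)).filter (· ∈ R)).card := by
        refine Finset.card_le_card fun x hx => ?_
        simp only [initSeg, Finset.mem_filter, Finset.mem_Icc, Finset.mem_range] at hx ⊢
        exact ⟨by omega, hx.2⟩
    _ = Nat.count (· ∈ R) (Nat.nth (· ∈ R) n + 1) := by rw [Nat.count_eq_card_filter_range]
    _ = n + 1 := Nat.count_nth_succ_of_infinite (p := (· ∈ R)) hR n

/-- The `+ 1` is needed when `r₀ = 0`: `initSeg` only counts from `1`. -/
theorem relCount_succ_le {R : Set ℕ} (hR : R.Infinite) (S : Set ℕ) (n : ℕ) :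
    relCount R S (n + 1) ≤ (initSeg S (Nat.nth (· ∈ R) n)).card + 1 := by
  classical
  refine (Finset.card_le_card_of_injOn (Nat.nth (· ∈ R)) (t := insert 0 (initSeg S _))
    (fun k hk => ?_) (fun a _ b _ hab => Nat.nth_injective hR hab)).trans
    (Finset.card_insert_le _ _)
  simp only [Finset.coe_filter, Finset.mem_range, Set.mem_ofPred_eq] at hk
  rcases Nat.eq_zero_or_pos (Nat.nth (· ∈ R) k) with h0 | hpos
  · simp [h0]
  · refine Finset.mem_insert_of_mem ?_
    simp only [initSeg, Finset.mem_filter, Finset.mem_Icc]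
    exact ⟨⟨hpos, (Nat.nth_le_nth hR).2 (by omega)⟩, hk.2⟩

theorem card_mul_empAvg (S : Set ℕ) (α : ℝ) (N : ℕ) (g : UnitAddCircle → ℝ) :
    ((initSeg S N).card : ℝ) * empAvg S α N g
      = ∑ s ∈ initSeg S N, g (((s : ℝ) * α : ℝ) : UnitAddCircle) := by
  rcases eq_or_ne (initSeg S N).card 0 with h | h
  · simp [empAvg, Finset.card_eq_zero.1 h]
  · rw [empAvg, ← mul_assoc, mul_inv_cancel₀ (by exact_mod_cast h), one_mul]

theorem empAvg_nonneg {g : UnitAddCircle → ℝ} (hg : ∀ x, 0 ≤ g x) (S : Set ℕ) (α : ℝ) (N : ℕ) :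
    0 ≤ empAvg S α N g :=
  mul_nonneg (by positivity) (Finset.sum_nonneg fun _ _ => hg _)

theorem relCount_succ_mul_empAvg_le {R S : Set ℕ} (hR : R.Infinite) (hSR : S ⊆ R)
    {g : UnitAddCircle → ℝ} (hg : ∀ x, 0 ≤ g x) (α : ℝ) (n : ℕ) :
    (relCount R S (n + 1) : ℝ) * empAvg S α (Nat.nth (· ∈ R) n) g
      ≤ (n + 1) * empAvg R α (Nat.nth (· ∈ R) n) g + empAvg S α (Nat.nth (· ∈ R) n) g := by
  set m := Nat.nth (· ∈ R) n
  have hS_nonneg := empAvg_nonneg hg S α m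
  have hR_nonneg := empAvg_nonneg hg R α m
  calc (relCount R S (n + 1) : ℝ) * empAvg S α m g
      ≤ ((initSeg S m).card + 1) * empAvg S α m g := by
        gcongr; exact_mod_cast relCount_succ_le hR S n
    _ = ∑ s ∈ initSeg S m, g (((s : ℝ) * α : ℝ) : UnitAddCircle) + empAvg S α m g := by
        rw [add_mul, one_mul, card_mul_empAvg]
    _ ≤ ∑ s ∈ initSeg R m, g (((s : ℝ) * α : ℝ) : UnitAddCircle) + empAvg S α m g := by
        gcongr ?_ + _
        exact Finset.sum_le_sum_of_subset_of_nonneg (initSeg_mono hSR m) fun _ _ _ => hg _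
    _ = (initSeg R m).card * empAvg R α m g + empAvg S α m g := by rw [card_mul_empAvg]
    _ ≤ (n + 1) * empAvg R α m g + empAvg S α m g := by
        gcongr; exact_mod_cast card_initSeg_nth_le hR n

theorem IsLimitMeasure.isProbabilityMeasure {S : Set ℕ} (hS : S.Infinite) {α : ℝ}
    {μ : Measure UnitAddCircle} (h : IsLimitMeasure S α μ) : IsProbabilityMeasure μ := by
  classical
  obtain ⟨s, hsS, hs⟩ := hS.exists_gt 0
  have hconst : ∀ᶠ N in atTop, empAvg S α N (fun x => (1 : C(UnitAddCircle, ℝ)) x) = 1 := by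
    filter_upwards [eventually_ge_atTop s] with N hN
    have hne : (initSeg S N).Nonempty :=
      ⟨s, Finset.mem_filter.2 ⟨Finset.mem_Icc.2 ⟨hs, hN⟩, hsS⟩⟩
    simp [empAvg, hne.card_pos.ne']
  have huniv : μ.real Set.univ = 1 := by
    simpa using
      tendsto_nhds_unique (h 1) (tendsto_const_nhds.congr' (hconst.mono fun _ h => h.symm))
  exact ⟨by rwa [measureReal_def, ENNReal.toReal_eq_one_iff] at huniv⟩

theorem limsup_relCount_mul_integral_le {R S : Set ℕ} (hR : R.Infinite) (hSR : S ⊆ R) {α : ℝ}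
    {μR μS : Measure UnitAddCircle} (hμR : IsLimitMeasure R α μR) (hμS : IsLimitMeasure S α μS)
    (f : C(UnitAddCircle, ℝ)) (hf : ∀ x, 0 ≤ f x) :
    limsup (fun N => (relCount R S N : ℝ) / N) atTop * ∫ x, f x ∂μS ≤ ∫ x, f x ∂μR := by
  have hnth : Tendsto (Nat.nth (· ∈ R)) atTop atTop := (Nat.nth_strictMono hR).tendsto_atTop
  have hS_lim := (hμS f).comp hnth
  have hR_lim := (hμR f).comp hnth
  rw [← limsup_nat_add _ 1]
  refine limsup_mul_le_of_forall_mul_le (fun n => by positivity) (fun n => empAvg_nonneg hf _ _ _)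
    hS_lim
    (b := fun n => empAvg R α (Nat.nth (· ∈ R) n) f + empAvg S α (Nat.nth (· ∈ R) n) f / (n + 1))
    ?_ fun n => ?_
  · simpa using hR_lim.add
      (hS_lim.div_atTop (tendsto_atTop_add_const_right _ 1 tendsto_natCast_atTop_atTop))
  · have h := relCount_succ_mul_empAvg_le hR hSR (g := f) hf α n
    rw [div_mul_eq_mul_div, div_le_iff₀ (by positivity)]
    push_cast
    rw [add_mul, div_mul_cancel₀ _ (by positivity)]
    linarith

theorem positive_density_absolutelyContinuous_general (R : Set ℕ) (hR : IsGoodSet R)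
    (S : Set ℕ) (hSR : S ⊆ R) (hS : IsGoodSet S)
    (hd : 0 < Filter.limsup (fun N => (relCount R S N : ℝ) / N) atTop) :
    ∀ β : ℝ, Irrational β →
      ∀ μR μS : MeasureTheory.Measure UnitAddCircle,
        IsLimitMeasure R β μR → IsLimitMeasure S β μS →
          μS ≪ μR ∧
          ∀ᵐ x ∂μR, μS.rnDeriv μR x ≤
            ENNReal.ofReal (1 / Filter.limsup (fun N => (relCount R S N : ℝ) / N) atTop) := by
  intro β _ μR μS hμR hμS
  have := hμR.isProbabilityMeasure hR.1
  have := hμS.isProbabilityMeasure hS.1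
  have hle : μS ≤ (1 / limsup (fun N => (relCount R S N : ℝ) / N) atTop).toNNReal • μR := by
    refine Measure.le_smul_of_forall_integral_le fun f hf => ?_
    rw [Real.coe_toNNReal _ (by positivity), one_div_mul_eq_div, le_div_iff₀' hd]
    exact limsup_relCount_mul_integral_le hR.1 hSR hμR hμS f hf
  exact ⟨Measure.absolutelyContinuous_of_le_smul hle, Measure.rnDeriv_le_of_le_smul hle⟩

/-- a good subset `S ⊆ R` of positive relative upper density has limit measures
absolutely continuous with respect to those of `R`, with Radon–Nikodym derivative bounded by
the reciprocal of the relative upper density. -/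
theorem positive_density_absolutelyContinuous (R : Set ℕ) (hR : IsGoodSet R)
    (hsub : Sublacunary R) (S : Set ℕ) (hSR : S ⊆ R) (hS : IsGoodSet S)
    (hd : 0 < Filter.limsup (fun N => (relCount R S N : ℝ) / N) atTop) :
    ∀ β : ℝ, Irrational β →
      ∀ μR μS : MeasureTheory.Measure UnitAddCircle,
        IsLimitMeasure R β μR → IsLimitMeasure S β μS →
          μS ≪ μR ∧
          ∀ᵐ x ∂μR, μS.rnDeriv μR x ≤
            ENNReal.ofReal (1 / Filter.limsup (fun N => (relCount R S N : ℝ) / N) atTop) :=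
  positive_density_absolutelyContinuous_general R hR S hSR hS hd
end

section
/- Let R ⊆ ℕ be a good set and let w be a good, integrable weight supported on R which satisfies ‖w‖_{1,R} > 0, i.e. limsup_N (1/N) Σ_{n≤N} w(n) > 0 (indexing w by the increasing enumeration (r_n) of R). Then for every β ∈ ℝ the limit measure μ_{w,β} is absolutely continuous with respect to μ_{R,β}. -/
open MeasureTheory Filter Topology
open scoped BigOperators

/-!
Approximate `w` in `‖·‖₁` by a good weight `v ≤ C`. For the infinitely many `N` with
`∑_{n<N} w n > c N`, where `c = ‖w‖₁ / 2`, the `w`-weighted average of a continuous `0 ≤ f ≤ 1`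
at the points `r_n β` is at most `C / c` times the plain average of `f (r_n β)`, up to an error
`‖v - w‖₁ / c`. In the limit `∫ f dμ_w ≤ K ∫ f dμ_R + ε`, and Urysohn's lemma together with the
regularity of finite measures on the torus turns this into `μ_w(B) ≤ K μ_R(B) + ε` for Borel `B`,
so `μ_R`-null sets are `μ_w`-null.
-/

open Finset

namespace MeasureTheory

variable {X : Type*} [TopologicalSpace X] [NormalSpace X] [MeasurableSpace X]
  [OpensMeasurableSpace X] {μ ν : Measure X} [IsFiniteMeasure μ] [IsFiniteMeasure ν]
  {K ε : ℝ}

lemma measureReal_le_of_forall_integral_le_of_subset (hK : 0 ≤ K)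
    (h : ∀ f : C(X, ℝ), (∀ x, 0 ≤ f x) → (∀ x, f x ≤ 1) → ∫ x, f x ∂μ ≤ K * ∫ x, f x ∂ν + ε)
    {F U : Set X} (hF : IsClosed F) (hU : IsOpen U) (hFU : F ⊆ U) :
    μ.real F ≤ K * ν.real U + ε := by
  obtain ⟨f, hfU, hfF, hf01⟩ := exists_continuous_zero_one_of_isClosed hU.isClosed_compl hF
    (Set.disjoint_compl_left_iff_subset.2 hFU)
  have hf_int (ρ : Measure X) [IsFiniteMeasure ρ] : Integrable f ρ :=
    (integrable_const (1 : ℝ)).mono' f.continuous.aestronglyMeasurable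
      (.of_forall fun x ↦ by simpa [abs_of_nonneg (hf01 x).1] using (hf01 x).2)
  have hF_le : F.indicator 1 ≤ f := fun x ↦ by
    by_cases hx : x ∈ F
    · simp [hx, hfF hx]
    · simp [hx, (hf01 x).1]
  have hf_le : ⇑f ≤ U.indicator 1 := fun x ↦ by
    by_cases hx : x ∈ U
    · simp [hx, (hf01 x).2]
    · simp [hx, hfU (Set.mem_compl hx)]
  calc μ.real F = ∫ x, F.indicator 1 x ∂μ := (integral_indicator_one hF.measurableSet).symm
    _ ≤ ∫ x, f x ∂μ :=
        integral_mono ((integrable_const 1).indicator hF.measurableSet) (hf_int μ) hF_le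
    _ ≤ K * ∫ x, f x ∂ν + ε := h f (fun x ↦ (hf01 x).1) (fun x ↦ (hf01 x).2)
    _ ≤ K * ∫ x, U.indicator 1 x ∂ν + ε := by
        have := integral_mono (hf_int ν) ((integrable_const 1).indicator hU.measurableSet) hf_le
        gcongr
    _ = K * ν.real U + ε := by rw [integral_indicator_one hU.measurableSet]

lemma measureReal_le_of_forall_integral_le [μ.WeaklyRegular] [ν.OuterRegular] (hK : 0 ≤ K)
    (h : ∀ f : C(X, ℝ), (∀ x, 0 ≤ f x) → (∀ x, f x ≤ 1) → ∫ x, f x ∂μ ≤ K * ∫ x, f x ∂ν + ε)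
    {s : Set X} (hs : MeasurableSet s) : μ.real s ≤ K * ν.real s + ε := by
  refine le_of_forall_pos_le_add fun δ hδ ↦ ?_
  obtain ⟨η, hη, hKη⟩ : ∃ η > 0, K * η + η = δ :=
    ⟨δ / (K + 1), by positivity, by field_simp⟩
  obtain ⟨F, hFs, hF, hμF⟩ := hs.exists_isClosed_lt_add (measure_ne_top μ s)
    (ENNReal.ofReal_pos.2 hη).ne'
  obtain ⟨U, hsU, hU, hνU⟩ := s.exists_isOpen_lt_of_lt (ν s + ENNReal.ofReal η)
    (ENNReal.lt_add_right (measure_ne_top ν s) (ENNReal.ofReal_pos.2 hη).ne')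
  have hμF' : μ.real s ≤ μ.real F + η := by
    simpa [measureReal_def, ENNReal.toReal_add, hη.le] using ENNReal.toReal_mono (by simp) hμF.le
  have hνU' : ν.real U ≤ ν.real s + η := by
    simpa [measureReal_def, ENNReal.toReal_add, hη.le] using ENNReal.toReal_mono (by simp) hνU.le
  calc μ.real s ≤ K * ν.real U + ε + η :=
        by linarith [measureReal_le_of_forall_integral_le_of_subset hK h hF hU (hFs.trans hsU)]
    _ ≤ K * (ν.real s + η) + ε + η := by gcongr
    _ = K * ν.real s + ε + δ := by linarith

theorem Measure.absolutelyContinuous_of_forall_integral_le [μ.WeaklyRegular] [ν.OuterRegular]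
    (h : ∀ ε > 0, ∃ K, 0 ≤ K ∧ ∀ f : C(X, ℝ), (∀ x, 0 ≤ f x) → (∀ x, f x ≤ 1) →
      ∫ x, f x ∂μ ≤ K * ∫ x, f x ∂ν + ε) :
    μ ≪ ν := by
  refine Measure.AbsolutelyContinuous.mk fun s hs hνs ↦ ?_
  have hμs : μ.real s ≤ 0 := le_of_forall_pos_le_add fun ε hε ↦ by
    obtain ⟨K, hK, hKε⟩ := h ε hε
    simpa [measureReal_def, hνs] using measureReal_le_of_forall_integral_le hK hKε hs
  exact (measureReal_eq_zero_iff (measure_ne_top μ s)).1 (le_antisymm hμs measureReal_nonneg)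

end MeasureTheory

namespace Nat

theorem filter_Ico_eq_image_nth {p : ℕ → Prop} [DecidablePred p] (hp : (Set.ofPred p).Infinite)
    (a b : ℕ) : {x ∈ Ico a b | p x} = (Ico (count p a) (count p b)).image (nth p) := by
  ext x
  simp only [mem_filter, mem_Ico, mem_image]
  constructor
  · rintro ⟨⟨hax, hxb⟩, hx⟩
    refine ⟨count p x, ⟨count_monotone p hax, ?_⟩, nth_count hx⟩
    rwa [lt_nth_iff_count_lt hp, nth_count hx]
  · rintro ⟨n, ⟨han, hnb⟩, rfl⟩
    exact ⟨⟨(count_le_iff_le_nth hp).1 han, (lt_nth_iff_count_lt hp).1 hnb⟩,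
      nth_mem_of_infinite hp n⟩

end Nat

open Classical in
theorem initSeg_nth_eq_image {R : Set ℕ} (hR : R.Infinite) (N : ℕ) :
    initSeg R (Nat.nth (· ∈ R) N) =
      (Ico (Nat.count (· ∈ R) 1) (N + 1)).image (Nat.nth (· ∈ R)) := by
  rw [initSeg, ← Ico_add_one_right_eq_Icc, Nat.filter_Ico_eq_image_nth (p := (· ∈ R)) hR,
    Nat.count_nth_succ_of_infinite (p := (· ∈ R)) hR]

theorem card_initSeg_mul_empAvg (S : Set ℕ) (α : ℝ) (M : ℕ) (f : UnitAddCircle → ℝ) :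
    (initSeg S M).card * empAvg S α M f = ∑ s ∈ initSeg S M, f ((s * α : ℝ) : UnitAddCircle) := by
  rcases eq_or_ne (initSeg S M).card 0 with h | h
  · simp [card_eq_zero.1 h]
  · exact mul_inv_cancel_left₀ (Nat.cast_ne_zero.2 h) _

theorem IsLimitMeasure.tendsto_average_nth {R : Set ℕ} (hR : R.Infinite) {β : ℝ}
    {μ : Measure UnitAddCircle} (h : IsLimitMeasure R β μ) (f : C(UnitAddCircle, ℝ)) :
    Tendsto (fun N : ℕ ↦ (N : ℝ)⁻¹ *
        ∑ n ∈ range N, f (((Nat.nth (· ∈ R) n : ℝ) * β : ℝ) : UnitAddCircle))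
      atTop (𝓝 (∫ x, f x ∂μ)) := by
  classical
  set g : ℕ → ℝ := fun n ↦ f (((Nat.nth (· ∈ R) n : ℝ) * β : ℝ) : UnitAddCircle)
  set e := Nat.count (· ∈ R) 1
  set A : ℕ → ℝ := fun N ↦ empAvg R β (Nat.nth (· ∈ R) N) (fun x ↦ f x)
  have he : e ≤ 1 := Nat.count_le _
  have hA : Tendsto A atTop (𝓝 (∫ x, f x ∂μ)) :=
    (h f).comp (Nat.nth_strictMono (p := (· ∈ R)) hR).tendsto_atTop
  -- The initial segments of `R` cut at `r_N` are `{r_n : e ≤ n ≤ N}`, where `e = 1` iff `0 ∈ R`.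
  have hsum (N : ℕ) : ∑ n ∈ range (N + 1), g n = ∑ n ∈ range e, g n + (N + 1 - e) * A N := by
    have hinj := Nat.nth_injective (p := (· ∈ R)) hR
    have hcard : ((initSeg R (Nat.nth (· ∈ R) N)).card : ℝ) = N + 1 - e := by
      rw [initSeg_nth_eq_image hR, card_image_of_injective _ hinj, Nat.card_Ico,
        Nat.cast_sub (by omega)]
      push_cast
      ring
    rw [← sum_range_add_sum_Ico g (by omega : e ≤ N + 1), ← hcard, card_initSeg_mul_empAvg,
      initSeg_nth_eq_image hR, sum_image hinj.injOn]
  have h0 : Tendsto (fun N : ℕ ↦ ((N : ℝ) + 1)⁻¹) atTop (𝓝 0) := by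
    simpa [one_div] using tendsto_one_div_add_atTop_nhds_zero_nat (𝕜 := ℝ)
  refine (tendsto_add_atTop_iff_nat 1).1 ?_
  have hlim := (h0.mul_const (∑ n ∈ range e, g n)).add
    (((tendsto_const_nhds (x := (1 : ℝ))).sub (h0.const_mul (e : ℝ))).mul hA)
  simp only [zero_mul, mul_zero, sub_zero, one_mul, zero_add] at hlim
  refine hlim.congr fun N ↦ ?_
  simp only [Nat.cast_add, Nat.cast_one, hsum]
  field_simp

theorem isProbabilityMeasure_of_integral_one {X : Type*} [MeasurableSpace X] {μ : Measure X}
    (h : ∫ _, (1 : ℝ) ∂μ = 1) : IsProbabilityMeasure μ :=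
  ⟨by simpa [integral_const, measureReal_def, ENNReal.toReal_eq_one_iff] using h⟩

theorem IsLimitMeasure.isProbabilityMeasure_s8 {R : Set ℕ} (hR : R.Infinite) {β : ℝ}
    {μ : Measure UnitAddCircle} (h : IsLimitMeasure R β μ) : IsProbabilityMeasure μ := by
  refine isProbabilityMeasure_of_integral_one (tendsto_nhds_unique
    (h.tendsto_average_nth hR (ContinuousMap.const _ 1)) (tendsto_const_nhds.congr' ?_))
  filter_upwards [eventually_ne_atTop 0] with N hN
  simp [hN]

theorem IsWeightLimit.isProbabilityMeasure_s8 {R : Set ℕ} {w : ℕ → ℝ} (hw0 : ∀ n, 0 ≤ w n)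
    (hw : ¬ Summable w) {β : ℝ} {μ : Measure UnitAddCircle} (h : IsWeightLimit R w β μ) :
    IsProbabilityMeasure μ := by
  refine isProbabilityMeasure_of_integral_one (tendsto_nhds_unique
    (h (ContinuousMap.const _ 1)) (tendsto_const_nhds.congr' ?_))
  filter_upwards [((not_summable_iff_tendsto_nat_atTop_of_nonneg hw0).1 hw).eventually_gt_atTop 0]
    with N hN
  simp [wAvg, hN.ne']

theorem Real.isBoundedUnder_le_of_limsup_ne_zero {α : Type*} {f : Filter α} {u : α → ℝ}
    (h : limsup u f ≠ 0) : f.IsBoundedUnder (· ≤ ·) u := by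
  by_contra hu
  refine h ?_
  have hempty : {a | ∀ᶠ x in f, u x ≤ a} = ∅ :=
    Set.eq_empty_of_forall_notMem fun a ha ↦ hu (isBoundedUnder_of_eventually_le ha)
  rw [limsup_eq, hempty, Real.sInf_empty]

theorem frequently_lt_average_of_lt_besic {w : ℕ → ℝ} (hw0 : ∀ n, 0 ≤ w n) {c : ℝ}
    (hc : c < besic w) : ∃ᶠ N in atTop, c < (∑ n ∈ range N, w n) / N := by
  simpa [abs_of_nonneg (hw0 _)] using
    frequently_lt_of_lt_limsup (isCoboundedUnder_le_of_le atTop fun N ↦ by positivity) hc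

theorem average_abs_sub_le (v w : ℕ → ℝ) {C : ℝ} (hv : ∀ n, |v n| ≤ C) (N : ℕ) :
    (∑ n ∈ range N, |v n - w n|) / N ≤ C + (∑ n ∈ range N, |w n|) / N := by
  rcases N.eq_zero_or_pos with rfl | hN
  · simpa using (abs_nonneg _).trans (hv 0)
  have hsum : ∑ n ∈ range N, |v n - w n| ≤ N * C + ∑ n ∈ range N, |w n| := by
    calc ∑ n ∈ range N, |v n - w n| ≤ ∑ n ∈ range N, (C + |w n|) :=
          sum_le_sum fun n _ ↦ (abs_sub _ _).trans (by linarith [hv n])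
      _ = N * C + ∑ n ∈ range N, |w n| := by simp [sum_add_distrib]
  rw [div_le_iff₀ (by positivity), add_mul, div_mul_cancel₀ _ (by positivity)]
  linarith

-- `besic` of a sequence with unbounded averages is the junk value `0`, so `besic w ≠ 0` bounds
-- the averages of `|w|`.
theorem eventually_average_abs_sub_lt {v w : ℕ → ℝ} (hw : besic w ≠ 0) {C : ℝ}
    (hv : ∀ n, |v n| ≤ C) {η : ℝ} (h : besic (fun n ↦ v n - w n) < η) :
    ∀ᶠ N in atTop, (∑ n ∈ range N, |v n - w n|) / N < η := by
  obtain ⟨b, hb⟩ := Real.isBoundedUnder_le_of_limsup_ne_zero hw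
  refine eventually_lt_of_limsup_lt h (isBoundedUnder_of_eventually_le (a := C + b) ?_)
  filter_upwards [hb] with N hN
  exact (average_abs_sub_le v w hv N).trans (by simpa using hN)

theorem weighted_average_le {w v F : ℕ → ℝ} {N : ℕ} {c C η : ℝ} (hc : 0 < c)
    (hw0 : ∀ n, 0 ≤ w n) (hvC : ∀ n, v n ≤ C) (hF0 : ∀ n, 0 ≤ F n) (hF1 : ∀ n, F n ≤ 1)
    (hw : c < (∑ n ∈ range N, w n) / N) (hvw : (∑ n ∈ range N, |v n - w n|) / N < η) :
    (∑ n ∈ range N, w n)⁻¹ * ∑ n ∈ range N, w n * F n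
      ≤ C / c * ((N : ℝ)⁻¹ * ∑ n ∈ range N, F n) + η / c := by
  have hN : (0 : ℝ) < N := by
    refine Nat.cast_pos.2 (Nat.pos_of_ne_zero fun hN ↦ ?_)
    simp only [hN, CharP.cast_eq_zero, div_zero] at hw
    linarith
  have hW : c * N < ∑ n ∈ range N, w n := (lt_div_iff₀ hN).1 hw
  have hE : ∑ n ∈ range N, |v n - w n| < η * N := (div_lt_iff₀ hN).1 hvw
  have hwF : ∑ n ∈ range N, w n * F n ≤ C * ∑ n ∈ range N, F n + ∑ n ∈ range N, |v n - w n| := by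
    rw [mul_sum, ← sum_add_distrib]
    refine sum_le_sum fun n _ ↦ ?_
    nlinarith [mul_le_mul_of_nonneg_right (hvC n) (hF0 n),
      mul_nonneg (sub_nonneg.2 (neg_abs_le (v n - w n))) (hF0 n),
      mul_nonneg (abs_nonneg (v n - w n)) (sub_nonneg.2 (hF1 n))]
  have hwF0 : 0 ≤ ∑ n ∈ range N, w n * F n := sum_nonneg fun n _ ↦ mul_nonneg (hw0 n) (hF0 n)
  calc (∑ n ∈ range N, w n)⁻¹ * ∑ n ∈ range N, w n * F n
      ≤ (c * N)⁻¹ * ∑ n ∈ range N, w n * F n := by gcongr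
    _ ≤ (c * N)⁻¹ * (C * ∑ n ∈ range N, F n + η * N) := by gcongr; linarith
    _ = C / c * ((N : ℝ)⁻¹ * ∑ n ∈ range N, F n) + η / c := by field_simp

theorem IntegrableWeight.exists_integral_le {R : Set ℕ} (hR : R.Infinite) {w : ℕ → ℝ}
    (hint : IntegrableWeight R w) (hw0 : ∀ n, 0 ≤ w n) (hpos : 0 < besic w) {β : ℝ}
    {μw μR : Measure UnitAddCircle} (hμw : IsWeightLimit R w β μw)
    (hμR : IsLimitMeasure R β μR) (ε : ℝ) (hε : 0 < ε) :
    ∃ K, 0 ≤ K ∧ ∀ f : C(UnitAddCircle, ℝ), (∀ x, 0 ≤ f x) → (∀ x, f x ≤ 1) →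
      ∫ x, f x ∂μw ≤ K * ∫ x, f x ∂μR + ε := by
  set c := besic w / 2
  have hc : 0 < c := by positivity
  obtain ⟨v, ⟨hv0, -, -⟩, ⟨C, hvC⟩, hvw⟩ := hint (ε * c) (by positivity)
  refine ⟨C / c, div_nonneg ((hv0 0).trans (hvC 0)) hc.le, fun f hf0 hf1 ↦ ?_⟩
  have hfreq := (frequently_lt_average_of_lt_besic hw0 (half_lt_self hpos)).and_eventually
    (eventually_average_abs_sub_lt hpos.ne' (fun n ↦ (abs_of_nonneg (hv0 n)).trans_le (hvC n)) hvw)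
  refine le_of_tendsto_of_tendsto_of_frequently (hμw f)
    (((hμR.tendsto_average_nth hR f).const_mul (C / c)).add_const ε) (hfreq.mono fun N hN ↦ ?_)
  have := weighted_average_le (F := fun n ↦ f (((Nat.nth (· ∈ R) n : ℝ) * β : ℝ) : UnitAddCircle))
    hc hw0 hvC (fun n ↦ hf0 _) (fun n ↦ hf1 _) hN.1 hN.2
  rwa [mul_div_cancel_right₀ _ hc.ne'] at this

/-- a good integrable weight on `R` of positive `‖·‖₁`-seminorm has all its limit
measures absolutely continuous with respect to those of `R`. -/
theorem integrable_weight_absolutelyContinuous (R : Set ℕ) (hR : IsGoodSet R)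
    (w : ℕ → ℝ) (hw : IsGoodWeight R w) (hint : IntegrableWeight R w)
    (hpos : 0 < besic w) :
    ∀ β : ℝ, ∀ μw μR : MeasureTheory.Measure UnitAddCircle,
      IsWeightLimit R w β μw → IsLimitMeasure R β μR → μw ≪ μR := by
  intro β μw μR hμw hμR
  obtain ⟨hw0, hw_not_summable, -⟩ := hw
  have := hμR.isProbabilityMeasure_s8 hR.1
  have := hμw.isProbabilityMeasure_s8 hw0 hw_not_summable
  exact Measure.absolutelyContinuous_of_forall_integral_le
    (hint.exists_integral_le hR.1 hw0 hpos hμw hμR)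
end

section
/- Let (S_k) be a sequence of subsets of ℕ that is Cauchy with respect to the seminorm ‖·‖₁, i.e. lim_{k→∞} sup_{l ≥ k} ‖𝟙_{S_l} − 𝟙_{S_k}‖₁ = 0. Then there exists a set S ⊆ ℕ with lim_{k→∞} ‖𝟙_{S_k} − 𝟙_S‖₁ = 0. -/
open MeasureTheory Filter Topology
open scoped BigOperators

/-!
Pass to a subsequence `S (φ j)` with `‖𝟙_{S (φ (j+1))} − 𝟙_{S (φ j)}‖₁ < 2⁻ʲ` and pick thresholds
`t 0 < t 1 < ⋯` such that the partial averages of `|𝟙_{S (φ (m+1))} − 𝟙_{S (φ m)}|` stay below `2⁻ᵐ`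
from `t m` on. Let `T` agree with `S (φ m)` on the block `[t (m-1), t m)`. There `𝟙_{S (φ j)} − 𝟙_T`
telescopes into the consecutive differences with indices in `[j, m)`, each of which is only summed
past its own threshold, so `‖𝟙_{S (φ j)} − 𝟙_T‖₁ ≤ ∑_{m ≥ j} 2⁻ᵐ = 2¹⁻ʲ`.
-/

open Finset

lemma isCoboundedUnder_le_cesaro_abs (f : ℕ → ℝ) :
    IsCoboundedUnder (· ≤ ·) atTop fun N : ℕ => (∑ n ∈ range N, |f n|) / N :=
  isCoboundedUnder_le_of_eventually_le atTop (x := 0) (.of_forall fun _ => by positivity)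

lemma isBoundedUnder_le_cesaro_abs {f : ℕ → ℝ} {C : ℝ} (hf : ∀ n, |f n| ≤ C) :
    IsBoundedUnder (· ≤ ·) atTop fun N : ℕ => (∑ n ∈ range N, |f n|) / N := by
  refine isBoundedUnder_of_eventually_le (a := C) ?_
  filter_upwards [eventually_gt_atTop 0] with N hN
  rw [div_le_iff₀ (by exact_mod_cast hN)]
  simpa [mul_comm] using sum_le_card_nsmul (range N) _ C fun n _ => hf n

/-- Also for unbounded averages, where the `limsup` takes the junk value `0`. -/
lemma besic_nonneg (f : ℕ → ℝ) : 0 ≤ besic f :=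
  Real.sInf_nonneg fun _ ha => ha.exists.elim fun _ hN => (by positivity : (0 : ℝ) ≤ _).trans hN

lemma besic_le_of_sum_abs_le {f : ℕ → ℝ} {A c : ℝ}
    (h : ∀ N : ℕ, ∑ n ∈ range N, |f n| ≤ A + c * N) : besic f ≤ c := by
  refine le_of_forall_pos_le_add fun δ hδ =>
    limsup_le_of_le (isCoboundedUnder_le_cesaro_abs f) ?_
  filter_upwards [eventually_gt_atTop ⌈A / δ⌉₊] with N hN
  have hA : A < δ * N := (div_lt_iff₀' hδ).1 ((Nat.le_ceil _).trans_lt (by exact_mod_cast hN))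
  have hN0 : (0 : ℝ) < N := by exact_mod_cast (Nat.zero_le _).trans_lt hN
  rw [div_le_iff₀ hN0]
  linarith [h N]

lemma eventually_sum_abs_le_of_besic_lt {f : ℕ → ℝ} {C c : ℝ} (hf : ∀ n, |f n| ≤ C)
    (h : besic f < c) : ∀ᶠ N : ℕ in atTop, ∑ n ∈ range N, |f n| ≤ c * N := by
  filter_upwards [eventually_lt_of_limsup_lt h (isBoundedUnder_le_cesaro_abs hf),
    eventually_gt_atTop 0] with N hlt hN
  exact ((div_lt_iff₀ (by exact_mod_cast hN)).1 hlt).le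

lemma besic_sub_le_add {a b c : ℕ → ℝ} {C : ℝ} (hab : ∀ n, |a n - b n| ≤ C)
    (hbc : ∀ n, |b n - c n| ≤ C) :
    besic (fun n => a n - c n) ≤ besic (fun n => a n - b n) + besic (fun n => b n - c n) := by
  have htri (N : ℕ) : (∑ n ∈ range N, |a n - c n|) / N ≤
      (∑ n ∈ range N, |a n - b n|) / N + (∑ n ∈ range N, |b n - c n|) / N := by
    rw [← add_div, ← sum_add_distrib]
    gcongr with n
    exact abs_sub_le _ _ _
  refine (limsup_le_limsup (.of_forall htri) (isCoboundedUnder_le_cesaro_abs _) ?_).trans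
    (limsup_add_le (isBoundedUnder_of ⟨0, fun _ => by positivity⟩)
      (isBoundedUnder_le_cesaro_abs hab) (isCoboundedUnder_le_cesaro_abs _)
      (isBoundedUnder_le_cesaro_abs hbc))
  exact isBoundedUnder_le_add (isBoundedUnder_le_cesaro_abs hab) (isBoundedUnder_le_cesaro_abs hbc)

lemma abs_indicator_one_sub_indicator_one_le {α : Type*} (A B : Set α) (x : α) :
    |A.indicator (fun _ => (1 : ℝ)) x - B.indicator (fun _ => (1 : ℝ)) x| ≤ 1 := by
  by_cases hA : x ∈ A <;> by_cases hB : x ∈ B <;> simp [hA, hB]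

section Gluing

variable {t : ℕ → ℕ}

/-- The `m` with `t (m - 1) ≤ n < t m`, reading `t (-1)` as `0`. -/
def blockIndex (ht : StrictMono t) (n : ℕ) : ℕ :=
  Nat.find (⟨n + 1, (Nat.lt_succ_self n).trans_le (ht.id_le _)⟩ : ∃ m, n < t m)

lemma lt_blockIndex_iff (ht : StrictMono t) {m n : ℕ} : m < blockIndex ht n ↔ t m ≤ n := by
  simp only [blockIndex, Nat.lt_find_iff, not_lt]
  exact ⟨fun h => h m le_rfl, fun h k hk => (ht.monotone hk).trans h⟩

lemma exists_strictMono_sum_abs_le {f : ℕ → ℕ → ℝ} {C : ℝ} (hf : ∀ m n, |f m n| ≤ C)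
    {ε : ℕ → ℝ} (h : ∀ m, besic (f m) < ε m) :
    ∃ t : ℕ → ℕ, StrictMono t ∧ ∀ m, ∀ N ≥ t m, ∑ n ∈ range N, |f m n| ≤ ε m * N :=
  extraction_forall_of_eventually fun m =>
    eventually_forall_ge_atTop.2 (eventually_sum_abs_le_of_besic_lt (hf m) (h m))

lemma sum_abs_sub_glue_le {g : ℕ → ℕ → ℝ} (ht : StrictMono t) {ε : ℕ → ℝ}
    (hthr : ∀ m, ∀ N ≥ t m, ∑ n ∈ range N, |g (m + 1) n - g m n| ≤ ε m * N) (j N : ℕ) :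
    ∑ n ∈ range N, |g j n - g (blockIndex ht n) n| ≤
      ∑ n ∈ range (t j), |g j n - g (blockIndex ht n) n| + (∑ m ∈ Ico j N, ε m) * N := by
  set d : ℕ → ℕ → ℝ := fun m n => |g (m + 1) n - g m n|
  have hpoint (n : ℕ) : |g j n - g (blockIndex ht n) n| ≤
      (if n < t j then |g j n - g (blockIndex ht n) n| else 0) +
        ∑ m ∈ Ico j (blockIndex ht n), d m n := by
    split_ifs with h
    · exact le_add_of_nonneg_right (sum_nonneg fun _ _ => abs_nonneg _)
    · have := dist_le_Ico_sum_dist (fun i => g i n) ((lt_blockIndex_iff ht).2 (not_lt.1 h)).le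
      simpa [Real.dist_eq, abs_sub_comm, d] using this
  have hswap : ∑ n ∈ range N, ∑ m ∈ Ico j (blockIndex ht n), d m n =
      ∑ m ∈ Ico j N, ∑ n ∈ Ico (t m) N, d m n :=
    sum_comm' fun n m => by
      have := ht.id_le m
      simp only [mem_range, mem_Ico, lt_blockIndex_iff ht, id] at this ⊢
      omega
  have hblock (m : ℕ) : ∑ n ∈ Ico (t m) N, d m n ≤ ε m * N := by
    rcases le_or_gt (t m) N with h | h
    · exact (sum_le_sum_of_subset_of_nonneg (fun n hn => mem_range.2 (mem_Ico.1 hn).2)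
        fun _ _ _ => abs_nonneg _).trans (hthr m N h)
    · -- the threshold condition at `N = t m > 0` forces `ε m ≥ 0`
      have hεm : 0 ≤ ε m * t m := (sum_nonneg fun _ _ => abs_nonneg _).trans (hthr m _ le_rfl)
      have htm : (0 : ℝ) < t m := by exact_mod_cast (Nat.zero_le N).trans_lt h
      rw [Ico_eq_empty_of_le h.le, sum_empty]
      exact mul_nonneg (nonneg_of_mul_nonneg_left hεm htm) (Nat.cast_nonneg N)
  calc ∑ n ∈ range N, |g j n - g (blockIndex ht n) n|
      ≤ ∑ n ∈ (range N).filter (· < t j), |g j n - g (blockIndex ht n) n| +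
          ∑ n ∈ range N, ∑ m ∈ Ico j (blockIndex ht n), d m n := by
        rw [sum_filter, ← sum_add_distrib]
        exact sum_le_sum fun n _ => hpoint n
    _ ≤ ∑ n ∈ range (t j), |g j n - g (blockIndex ht n) n| + (∑ m ∈ Ico j N, ε m) * N := by
        rw [hswap, sum_mul]
        gcongr with m
        · exact fun n hn => mem_range.2 (mem_filter.1 hn).2
        · exact hblock m

lemma besic_sub_glue_le {g : ℕ → ℕ → ℝ} (ht : StrictMono t)
    (hthr : ∀ m, ∀ N ≥ t m, ∑ n ∈ range N, |g (m + 1) n - g m n| ≤ (1 / 2) ^ m * N) (j : ℕ) :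
    besic (fun n => g j n - g (blockIndex ht n) n) ≤ 2 * (1 / 2) ^ j := by
  refine besic_le_of_sum_abs_le (A := ∑ n ∈ range (t j), |g j n - g (blockIndex ht n) n|)
    fun N => (sum_abs_sub_glue_le ht hthr j N).trans ?_
  have hgeom : ∑ m ∈ Ico j N, ((1 : ℝ) / 2) ^ m ≤ 2 * (1 / 2) ^ j :=
    (geom_sum_Ico_le_of_lt_one (by norm_num) (by norm_num)).trans_eq (by ring)
  gcongr

end Gluing

theorem exists_set_besic_sub_le_of_fast {S : ℕ → Set ℕ}
    (h : ∀ j, besic (fun n => (S (j + 1)).indicator (fun _ => (1 : ℝ)) n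
      - (S j).indicator (fun _ => (1 : ℝ)) n) < (1 / 2) ^ j) :
    ∃ T : Set ℕ, ∀ j, besic (fun n => (S j).indicator (fun _ => (1 : ℝ)) n
      - T.indicator (fun _ => (1 : ℝ)) n) ≤ 2 * (1 / 2) ^ j := by
  obtain ⟨t, ht, hthr⟩ :=
    exists_strictMono_sum_abs_le (fun m n => abs_indicator_one_sub_indicator_one_le _ _ n) h
  refine ⟨{n | n ∈ S (blockIndex ht n)}, fun j => ?_⟩
  convert besic_sub_glue_le (g := fun m n => (S m).indicator (fun _ => (1 : ℝ)) n) ht hthr j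
    using 4 with n
  by_cases hn : n ∈ S (blockIndex ht n) <;> simp [hn]

/-- a Cauchy sequence of subsets of `ℕ` in the Besicovitch seminorm `‖·‖₁`
converges to some set `S ⊆ ℕ` in `‖·‖₁`. -/
theorem cauchy_sets_converge (S : ℕ → Set ℕ)
    (hcauchy : ∀ ε > (0 : ℝ), ∃ K, ∀ k ≥ K, ∀ l ≥ k,
      besic (fun n => (S l).indicator (fun _ => (1 : ℝ)) n
        - (S k).indicator (fun _ => (1 : ℝ)) n) < ε) :
    ∃ T : Set ℕ,
      Tendsto (fun k => besic (fun n => (S k).indicator (fun _ => (1 : ℝ)) n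
        - T.indicator (fun _ => (1 : ℝ)) n)) atTop (𝓝 0) := by
  obtain ⟨φ, hφ, hφS⟩ : ∃ φ : ℕ → ℕ, StrictMono φ ∧ ∀ j, ∀ l ≥ φ j,
      besic (fun n => (S l).indicator (fun _ => (1 : ℝ)) n
        - (S (φ j)).indicator (fun _ => (1 : ℝ)) n) < (1 / 2) ^ j :=
    extraction_forall_of_eventually fun j =>
      eventually_atTop.2 (hcauchy _ (by positivity))
  obtain ⟨T, hT⟩ := exists_set_besic_sub_le_of_fast (S := S ∘ φ) fun j =>
    hφS j _ (hφ.monotone j.le_succ)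
  refine ⟨T, tendsto_order.2 ⟨fun a ha => .of_forall fun _ => ha.trans_le (besic_nonneg _),
    fun ε hε => ?_⟩⟩
  obtain ⟨j, hj⟩ :=
    exists_pow_lt_of_lt_one (by positivity : 0 < ε / 3) (by norm_num : (1 / 2 : ℝ) < 1)
  filter_upwards [eventually_ge_atTop (φ j)] with k hk
  calc _ ≤ besic (fun n => (S k).indicator (fun _ => (1 : ℝ)) n
          - (S (φ j)).indicator (fun _ => (1 : ℝ)) n)
        + besic (fun n => (S (φ j)).indicator (fun _ => (1 : ℝ)) n
          - T.indicator (fun _ => (1 : ℝ)) n) :=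
        besic_sub_le_add (fun n => abs_indicator_one_sub_indicator_one_le _ _ n)
          (fun n => abs_indicator_one_sub_indicator_one_le _ _ n)
    _ < (1 / 2) ^ j + 2 * (1 / 2) ^ j := add_lt_add_of_lt_of_le (hφS j k hk) (hT j)
    _ < ε := by linarith
end

section
/- Let R ⊆ ℕ be infinite and let σ : R → [0,1] be a weight on R such that for some constant b > 0 one has liminf_{N→∞} σ(R(N))/log N > b. Let (X_r)_{r∈R} be independent {0,1}-valued random variables on a probability space (Ω,P) with P(X_r = 1) = σ(r). Then almost surely sup_{N≥2} max_{β∈ℝ} |Σ_{r∈R(N)} (X_r − σ(r)) e(rβ)| / √((log N)·σ(R(N))) < ∞. -/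
open MeasureTheory Filter Topology
open scoped BigOperators

/-!
Each `X_r - σ(r)` is a centred Bernoulli variable with `E exp(u(X_r - σ(r))) ≤ exp(σ(r) u²)` for
`|u| ≤ 1`. With `L = log N` and `V = σ(R(N))`, Chernoff's bound for `λ = √(L / (V + L))` makes
`Re S_N(β)` and `Im S_N(β)` of `S_N(β) = ∑_{r ∈ R(N)} (X_r - σ(r)) e(rβ)` exceed `7√(L(V + L))`
with probability at most `2N⁻⁶` each. As `β ↦ S_N(β)` is `1`-periodic and `2πN²`-Lipschitz, the
`N²` points `j / N²` control every `β` up to an additive `2π`, so the union bound costs `O(N⁻⁴)`,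
which is summable. By Borel–Cantelli, almost surely `‖S_N‖ ≤ 14√(L(V + L)) + 2π` for all large
`N`, and `V ≥ bL` turns this into `O(√(LV))`. The finitely many remaining `N` are covered by the
trivial bound, since `X_r = 0` almost surely when `σ(r) = 0`.
-/

open ProbabilityTheory Finset

section Character

lemma eC_eq_exp_mul_I (x : ℝ) : eC x = Complex.exp (((2 * Real.pi * x : ℝ) : ℂ) * Complex.I) := by
  unfold eC; push_cast; ring_nf

lemma norm_eC (x : ℝ) : ‖eC x‖ = 1 := by
  rw [eC_eq_exp_mul_I]; exact Complex.norm_exp_ofReal_mul_I _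

lemma eC_re (x : ℝ) : (eC x).re = Real.cos (2 * Real.pi * x) := by
  rw [eC_eq_exp_mul_I]; exact Complex.exp_ofReal_mul_I_re _

lemma eC_im (x : ℝ) : (eC x).im = Real.sin (2 * Real.pi * x) := by
  rw [eC_eq_exp_mul_I]; exact Complex.exp_ofReal_mul_I_im _

lemma eC_add (x y : ℝ) : eC (x + y) = eC x * eC y := by
  unfold eC; rw [← Complex.exp_add]; push_cast; ring_nf

lemma eC_intCast (k : ℤ) : eC k = 1 := by
  rw [eC, show 2 * (Real.pi : ℂ) * Complex.I * ((k : ℝ) : ℂ) = k * (2 * Real.pi * Complex.I) by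
    push_cast; ring]
  exact Complex.exp_int_mul_two_pi_mul_I k

lemma norm_eC_sub_eC_le (x y : ℝ) : ‖eC x - eC y‖ ≤ 2 * Real.pi * |x - y| := by
  have hsplit : eC x - eC y = eC y * (eC (x - y) - 1) := by
    rw [mul_sub, ← eC_add, add_sub_cancel, mul_one]
  rw [hsplit, norm_mul, norm_eC, one_mul, eC_eq_exp_mul_I, mul_comm]
  refine Real.norm_exp_I_mul_ofReal_sub_one_le.trans_eq ?_
  rw [Real.norm_eq_abs, abs_mul, abs_of_pos Real.two_pi_pos]

end Character

noncomputable def expSum (s : Finset ℕ) (c : ℕ → ℝ) (β : ℝ) : ℂ :=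
  ∑ r ∈ s, (c r : ℂ) * eC (r * β)

section ExpSum

variable (s : Finset ℕ) (c : ℕ → ℝ)

lemma expSum_int_fract (β : ℝ) : expSum s c (Int.fract β) = expSum s c β := by
  refine Finset.sum_congr rfl fun r _ => ?_
  have : (r : ℝ) * β = r * Int.fract β + ((r * ⌊β⌋ : ℤ) : ℝ) := by
    rw [Int.fract]; push_cast; ring
  rw [this, eC_add, eC_intCast, mul_one]

lemma expSum_re (β : ℝ) :
    (expSum s c β).re = ∑ r ∈ s, Real.cos (2 * Real.pi * (r * β)) * c r := by
  simp only [expSum, Complex.re_sum, Complex.re_ofReal_mul, eC_re, mul_comm]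

lemma expSum_im (β : ℝ) :
    (expSum s c β).im = ∑ r ∈ s, Real.sin (2 * Real.pi * (r * β)) * c r := by
  simp only [expSum, Complex.im_sum, Complex.im_ofReal_mul, eC_im, mul_comm]

lemma norm_expSum_le (β : ℝ) : ‖expSum s c β‖ ≤ ∑ r ∈ s, |c r| :=
  (norm_sum_le _ _).trans_eq <| by simp [norm_eC]

variable {s c}

lemma norm_expSum_sub_le {N : ℕ} (hc : ∀ r ∈ s, |c r| ≤ 1) (hs : ∀ r ∈ s, r ≤ N) (β β' : ℝ) :
    ‖expSum s c β - expSum s c β'‖ ≤ #s * (2 * Real.pi * N * |β - β'|) := by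
  rw [expSum, expSum, ← Finset.sum_sub_distrib]
  refine (norm_sum_le _ _).trans ?_
  rw [← nsmul_eq_mul, ← Finset.sum_const]
  refine Finset.sum_le_sum fun r hr => ?_
  rw [← mul_sub, norm_mul, Complex.norm_real, Real.norm_eq_abs, ← one_mul (2 * _ * _ * _)]
  have hrN : (r : ℝ) ≤ N := by exact_mod_cast hs r hr
  refine mul_le_mul (hc r hr) ((norm_eC_sub_eC_le _ _).trans ?_) (norm_nonneg _) zero_le_one
  rw [← mul_sub, abs_mul, Nat.abs_cast, ← mul_assoc]
  gcongr

lemma exists_norm_expSum_sub_le {N M : ℕ} (hc : ∀ r ∈ s, |c r| ≤ 1) (hs : ∀ r ∈ s, r ≤ N)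
    (hM : 0 < M) (β : ℝ) :
    ∃ j < M, ‖expSum s c β - expSum s c (j / M)‖ ≤ #s * (2 * Real.pi * N / M) := by
  have hMpos : (0 : ℝ) < M := by exact_mod_cast hM
  set j := ⌊M * Int.fract β⌋₊
  have hj_le : (j : ℝ) ≤ M * Int.fract β := Nat.floor_le (by positivity)
  have hj_gt : M * Int.fract β < j + 1 := Nat.lt_floor_add_one _
  refine ⟨j, ?_, ?_⟩
  · have : (j : ℝ) < M := hj_le.trans_lt (mul_lt_of_lt_one_right hMpos (Int.fract_lt_one β))
    exact_mod_cast this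
  · rw [← expSum_int_fract s c β]
    refine (norm_expSum_sub_le hc hs _ _).trans ?_
    have hdist : |Int.fract β - j / M| ≤ 1 / M := by
      rw [show Int.fract β - j / M = (M * Int.fract β - j) / M by field_simp, abs_div,
        abs_of_pos hMpos]
      gcongr
      rw [abs_le]
      constructor <;> linarith
    refine mul_le_mul_of_nonneg_left ?_ (Nat.cast_nonneg _)
    calc 2 * Real.pi * N * |Int.fract β - j / M| ≤ 2 * Real.pi * N * (1 / M) := by gcongr
      _ = 2 * Real.pi * N / M := by ring

lemma exists_norm_expSum_le_mul_sqrt {w : ℕ → ℝ} (hw : ∀ r ∈ s, 0 ≤ w r)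
    (hcw : ∀ r ∈ s, w r = 0 → c r = 0) {L : ℝ} (hL : 0 < L) :
    ∃ C, ∀ β, ‖expSum s c β‖ ≤ C * √(L * ∑ r ∈ s, w r) := by
  rcases (Finset.sum_nonneg hw).eq_or_lt with hzero | hpos
  · refine ⟨0, fun β => ?_⟩
    have hc0 : ∀ r ∈ s, c r = 0 := fun r hr =>
      hcw r hr ((Finset.sum_eq_zero_iff_of_nonneg hw).1 hzero.symm r hr)
    have : expSum s c β = 0 :=
      Finset.sum_eq_zero fun r hr => by rw [hc0 r hr, Complex.ofReal_zero, zero_mul]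
    rw [this, norm_zero, zero_mul]
  · have hsqrt : 0 < √(L * ∑ r ∈ s, w r) := Real.sqrt_pos.2 (mul_pos hL hpos)
    exact ⟨(∑ r ∈ s, |c r|) / √(L * ∑ r ∈ s, w r), fun β => by
      rw [div_mul_cancel₀ _ hsqrt.ne']; exact norm_expSum_le s c β⟩

end ExpSum

lemma mem_initSeg {S : Set ℕ} {N r : ℕ} : r ∈ initSeg S N ↔ (1 ≤ r ∧ r ≤ N) ∧ r ∈ S := by
  simp [initSeg]

lemma card_initSeg_le (S : Set ℕ) (N : ℕ) : #(initSeg S N) ≤ N := by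
  classical
  exact (Finset.card_filter_le _ _).trans (by simp)

section Bernoulli

variable {Ω : Type*} [MeasurableSpace Ω] {P : Measure Ω} [IsProbabilityMeasure P]

lemma abs_sub_le_one_of_zero_or_one {x p : ℝ} (hx : x = 0 ∨ x = 1) (hp0 : 0 ≤ p) (hp1 : p ≤ 1) :
    |x - p| ≤ 1 := by
  rcases hx with rfl | rfl <;> rw [abs_le] <;> constructor <;> linarith

lemma integrable_comp_of_zero_or_one {X : Ω → ℝ} (hX : Measurable X)
    (h01 : ∀ ω, X ω = 0 ∨ X ω = 1) {f : ℝ → ℝ} (hf : Measurable f) :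
    Integrable (fun ω => f (X ω)) P :=
  Integrable.of_bound (hf.comp hX).aestronglyMeasurable (|f 0| + |f 1|) <|
    ae_of_all _ fun ω => by
      rcases h01 ω with h | h <;> simp only [h, Real.norm_eq_abs] <;>
        linarith [abs_nonneg (f 0), abs_nonneg (f 1)]

lemma mgf_sub_le_of_zero_or_one {X : Ω → ℝ} (hX : Measurable X) (h01 : ∀ ω, X ω = 0 ∨ X ω = 1)
    {p : ℝ} (hp : 0 ≤ p) (hdist : P {ω | X ω = 1} = ENNReal.ofReal p) {u : ℝ} (hu : |u| ≤ 1) :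
    mgf (fun ω => X ω - p) P u ≤ Real.exp (p * u ^ 2) := by
  have hmean : ∫ ω, X ω ∂P = p := by
    have : X = (X ⁻¹' {1}).indicator 1 :=
      funext fun ω => by rcases h01 ω with h | h <;> simp [h]
    rw [this, integral_indicator_one (hX (measurableSet_singleton 1)), measureReal_def]
    exact (congrArg ENNReal.toReal hdist).trans (ENNReal.toReal_ofReal hp)
  have hpt : ∀ ω,
      Real.exp (u * (X ω - p)) = Real.exp (-(u * p)) * (1 + (Real.exp u - 1) * X ω) := by
    intro ω
    rcases h01 ω with h | h
    · simp [h]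
    · rw [h, mul_one, add_sub_cancel, ← Real.exp_add]; ring_nf
  have hXint : Integrable X P := integrable_comp_of_zero_or_one hX h01 measurable_id
  calc mgf (fun ω => X ω - p) P u
      = Real.exp (-(u * p)) * (1 + (Real.exp u - 1) * p) := by
        simp only [mgf, hpt]
        rw [integral_const_mul, integral_add (integrable_const 1) (hXint.const_mul _),
          integral_const_mul, hmean]
        simp
    _ ≤ Real.exp (-(u * p)) * Real.exp ((Real.exp u - 1) * p) := by
        gcongr; linarith [Real.add_one_le_exp ((Real.exp u - 1) * p)]
    _ = Real.exp (p * (Real.exp u - 1 - u)) := by rw [← Real.exp_add]; ring_nf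
    _ ≤ Real.exp (p * u ^ 2) := by
        have := Real.norm_exp_sub_one_sub_id_le (x := u) (by simpa using hu)
        rw [Real.norm_eq_abs, Real.norm_eq_abs, sq_abs] at this
        gcongr
        exact (le_abs_self _).trans this

end Bernoulli

section Chernoff

variable {Ω : Type*} [MeasurableSpace Ω] {P : Measure Ω} [IsProbabilityMeasure P]
  {ι : Type*} {X : ι → Ω → ℝ} {p a : ι → ℝ}

lemma measure_sum_mul_sub_ge_le (hX : ∀ i, Measurable (X i)) (h01 : ∀ i ω, X i ω = 0 ∨ X i ω = 1)
    (hp : ∀ i, 0 ≤ p i) (hdist : ∀ i, P {ω | X i ω = 1} = ENNReal.ofReal (p i))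
    (hind : iIndepFun X P) (ha : ∀ i, |a i| ≤ 1) (s : Finset ι) {l : ℝ} (hl0 : 0 ≤ l)
    (hl1 : l ≤ 1) (t : ℝ) :
    P {ω | t ≤ ∑ i ∈ s, a i * (X i ω - p i)} ≤
      ENNReal.ofReal (Real.exp (l ^ 2 * ∑ i ∈ s, p i - l * t)) := by
  set Y : ι → Ω → ℝ := fun i ω => a i * (X i ω - p i)
  have hY : ∀ i, Measurable (Y i) := fun i => ((hX i).sub_const _).const_mul _
  have hYind : iIndepFun Y P := hind.comp (fun i x => a i * (x - p i)) fun i => by fun_prop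
  have hset : {ω | t ≤ ∑ i ∈ s, a i * (X i ω - p i)} = {ω | t ≤ (∑ i ∈ s, Y i) ω} := by
    simp only [Y, Finset.sum_apply]
  have hmgf : ∀ i, mgf (Y i) P l ≤ Real.exp (l ^ 2 * p i) := fun i => by
    have hal : |a i * l| ≤ 1 := by
      rw [abs_mul, abs_of_nonneg hl0]; nlinarith [ha i, abs_nonneg (a i)]
    refine (mgf_const_mul (a i)).trans_le
      ((mgf_sub_le_of_zero_or_one (hX i) (h01 i) (hp i) (hdist i) hal).trans ?_)
    refine Real.exp_le_exp.2 ?_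
    calc p i * (a i * l) ^ 2 = a i ^ 2 * (l ^ 2 * p i) := by ring
      _ ≤ 1 * (l ^ 2 * p i) := by
          gcongr
          · exact mul_nonneg (sq_nonneg _) (hp i)
          · exact (sq_le_one_iff_abs_le_one _).2 (ha i)
      _ = l ^ 2 * p i := one_mul _
  have hint : Integrable (fun ω => Real.exp (l * (∑ i ∈ s, Y i) ω)) P :=
    hYind.integrable_exp_mul_sum hY fun i _ => integrable_comp_of_zero_or_one (hX i) (h01 i)
      (by fun_prop : Measurable fun x => Real.exp (l * (a i * (x - p i))))
  rw [hset, ← ofReal_measureReal]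
  refine ENNReal.ofReal_le_ofReal ?_
  calc P.real {ω | t ≤ (∑ i ∈ s, Y i) ω}
      ≤ Real.exp (-l * t) * mgf (∑ i ∈ s, Y i) P l := measure_ge_le_exp_mul_mgf t hl0 hint
    _ ≤ Real.exp (-l * t) * ∏ i ∈ s, Real.exp (l ^ 2 * p i) := by
        rw [hYind.mgf_sum hY]
        gcongr with i
        · exact fun i _ => mgf_nonneg
        · exact hmgf i
    _ = Real.exp (l ^ 2 * ∑ i ∈ s, p i - l * t) := by
        rw [← Real.exp_sum, ← Real.exp_add, Finset.mul_sum]; ring_nf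

/-- The threshold comes from `λ = √(L / (V + L))` in Chernoff's bound, `V = ∑ i ∈ s, p i`:
the exponent `λ²V - 7λ√(L(V + L))` is then at most `L - 7L`. -/
lemma measure_sum_mul_sub_ge_le_exp_neg (hX : ∀ i, Measurable (X i))
    (h01 : ∀ i ω, X i ω = 0 ∨ X i ω = 1) (hp : ∀ i, 0 ≤ p i)
    (hdist : ∀ i, P {ω | X i ω = 1} = ENNReal.ofReal (p i)) (hind : iIndepFun X P)
    (ha : ∀ i, |a i| ≤ 1) (s : Finset ι) {L : ℝ} (hL : 0 < L) :
    P {ω | 7 * √(L * (∑ i ∈ s, p i + L)) ≤ ∑ i ∈ s, a i * (X i ω - p i)} ≤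
      ENNReal.ofReal (Real.exp (-6 * L)) := by
  set V := ∑ i ∈ s, p i
  have hV : 0 ≤ V := Finset.sum_nonneg fun i _ => hp i
  have hW : 0 < V + L := by linarith
  set l := √(L / (V + L))
  have hl2 : l ^ 2 = L / (V + L) := Real.sq_sqrt (by positivity)
  have hl1 : l ≤ 1 := Real.sqrt_le_one.2 ((div_le_one hW).2 (by linarith))
  have hlt : l * √(L * (V + L)) = L := by
    rw [← Real.sqrt_mul (by positivity), show L / (V + L) * (L * (V + L)) = L ^ 2 by
      field_simp, Real.sqrt_sq hL.le]
  refine (measure_sum_mul_sub_ge_le hX h01 hp hdist hind ha s (Real.sqrt_nonneg _) hl1 _).trans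
    (ENNReal.ofReal_le_ofReal (Real.exp_le_exp.2 ?_))
  have hlV : L / (V + L) * V ≤ L := by
    rw [div_mul_eq_mul_div, div_le_iff₀ hW]; nlinarith
  rw [hl2, mul_left_comm, hlt]
  linarith

lemma measure_abs_sum_mul_sub_ge_le (hX : ∀ i, Measurable (X i))
    (h01 : ∀ i ω, X i ω = 0 ∨ X i ω = 1) (hp : ∀ i, 0 ≤ p i)
    (hdist : ∀ i, P {ω | X i ω = 1} = ENNReal.ofReal (p i)) (hind : iIndepFun X P)
    (ha : ∀ i, |a i| ≤ 1) (s : Finset ι) {L : ℝ} (hL : 0 < L) :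
    P {ω | 7 * √(L * (∑ i ∈ s, p i + L)) ≤ |∑ i ∈ s, a i * (X i ω - p i)|} ≤
      ENNReal.ofReal (2 * Real.exp (-6 * L)) := by
  have hpos := measure_sum_mul_sub_ge_le_exp_neg hX h01 hp hdist hind ha s hL
  have hneg := measure_sum_mul_sub_ge_le_exp_neg hX h01 hp hdist hind (a := fun i => -a i)
    (fun i => (abs_neg (a i)).trans_le (ha i)) s hL
  simp only [neg_mul, Finset.sum_neg_distrib] at hneg
  calc P {ω | 7 * √(L * (∑ i ∈ s, p i + L)) ≤ |∑ i ∈ s, a i * (X i ω - p i)|}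
      ≤ P ({ω | 7 * √(L * (∑ i ∈ s, p i + L)) ≤ ∑ i ∈ s, a i * (X i ω - p i)} ∪
          {ω | 7 * √(L * (∑ i ∈ s, p i + L)) ≤ -∑ i ∈ s, a i * (X i ω - p i)}) :=
        measure_mono fun ω hω => by simpa only [Set.mem_union, Set.mem_ofPred_eq, le_abs] using hω
    _ ≤ _ := (measure_union_le _ _).trans (add_le_add hpos hneg)
    _ = _ := by rw [← ENNReal.ofReal_add (by positivity) (by positivity)]; ring_nf

end Chernoff

lemma ae_eventually_notMem_of_summable {α : Type*} [MeasurableSpace α] {μ : Measure α}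
    {s : ℕ → Set α} {f : ℕ → ℝ} (hf : Summable f)
    (hs : ∀ᶠ n in atTop, μ (s n) ≤ ENNReal.ofReal (f n)) :
    ∀ᵐ x ∂μ, ∀ᶠ n in atTop, x ∉ s n := by
  obtain ⟨n₀, hn₀⟩ := eventually_atTop.1 hs
  have htsum : ∑' n, μ (s (n + n₀)) ≠ ⊤ :=
    ne_top_of_le_ne_top ((summable_nat_add_iff n₀).2 hf).tsum_ofReal_ne_top
      (ENNReal.tsum_le_tsum fun n => hn₀ _ (Nat.le_add_left _ _))
  filter_upwards [ae_eventually_notMem htsum] with x hx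
  filter_upwards [(tendsto_sub_atTop_nat n₀).eventually hx, eventually_ge_atTop n₀] with n hn hle
  rwa [Nat.sub_add_cancel hle] at hn

lemma exists_forall_le_mul_of_eventually {α : Type*} {F : ℕ → α → ℝ} {g : ℕ → ℝ} {p : ℕ → Prop}
    (hg : ∀ n, 0 ≤ g n) (hp : ∀ n, p n → ∃ C, ∀ x, F n x ≤ C * g n) {C₀ : ℝ}
    (hev : ∀ᶠ n in atTop, ∀ x, F n x ≤ C₀ * g n) :
    ∃ C, ∀ n, p n → ∀ x, F n x ≤ C * g n := by
  classical
  obtain ⟨n₀, hn₀⟩ := eventually_atTop.1 hev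
  let C' : ℕ → ℝ := fun n => if h : p n then (hp n h).choose else 0
  refine ⟨max C₀ (∑ n ∈ range n₀, |C' n|), fun n hn x => ?_⟩
  rcases le_or_gt n₀ n with hle | hlt
  · exact (hn₀ n hle x).trans (mul_le_mul_of_nonneg_right (le_max_left _ _) (hg n))
  · have hC' : ∀ x, F n x ≤ C' n * g n := by simpa [C', hn] using (hp n hn).choose_spec
    refine (hC' x).trans (mul_le_mul_of_nonneg_right ?_ (hg n))
    calc C' n ≤ |C' n| := le_abs_self _
      _ ≤ ∑ n ∈ range n₀, |C' n| :=
          Finset.single_le_sum (fun n _ => abs_nonneg (C' n)) (Finset.mem_range.2 hlt)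
      _ ≤ _ := le_max_right _ _

lemma mul_sqrt_mul_add_add_le {A B b L V : ℝ} (hA : 0 ≤ A) (hB : 0 ≤ B) (hb : 0 < b)
    (hL : 1 ≤ L) (hV : b * L ≤ V) :
    A * √(L * (V + L)) + B ≤ (A * √(1 + b⁻¹) + B / √b) * √(L * V) := by
  have hLV : √(L * (V + L)) ≤ √(1 + b⁻¹) * √(L * V) := by
    rw [← Real.sqrt_mul (by positivity)]
    refine Real.sqrt_le_sqrt ?_
    have : L ≤ b⁻¹ * V := by rw [inv_mul_eq_div, le_div_iff₀ hb]; linarith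
    nlinarith
  have hb_le : √b ≤ √(L * V) := by
    refine Real.sqrt_le_sqrt ?_
    nlinarith [mul_le_mul_of_nonneg_left hV (by linarith : 0 ≤ L),
      mul_le_mul_of_nonneg_left (one_le_pow₀ hL : 1 ≤ L ^ 2) hb.le]
  have hB_le : B ≤ B / √b * √(L * V) := by
    rw [div_mul_eq_mul_div, le_div_iff₀ (Real.sqrt_pos.2 hb)]
    exact mul_le_mul_of_nonneg_left hb_le hB
  calc A * √(L * (V + L)) + B ≤ A * (√(1 + b⁻¹) * √(L * V)) + B / √b * √(L * V) := by gcongr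
    _ = _ := by ring

lemma eventually_one_le_log_and_mul_log_le {R : Set ℕ} {σ : ℕ → ℝ} {b : ℝ}
    (hliminf : (b : EReal) <
      Filter.liminf (fun N : ℕ => (((wSum R σ N / Real.log N : ℝ)) : EReal)) atTop) :
    ∀ᶠ N : ℕ in atTop, 1 ≤ Real.log N ∧ b * Real.log N ≤ wSum R σ N := by
  filter_upwards [eventually_lt_of_lt_liminf hliminf, eventually_ge_atTop 3] with N hN hN3
  have hlog : 1 ≤ Real.log N := by
    rw [Real.le_log_iff_exp_le (by positivity)]
    exact Real.exp_one_lt_three.le.trans (by exact_mod_cast hN3)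
  exact ⟨hlog, ((lt_div_iff₀ (by linarith)).1 (EReal.coe_lt_coe_iff.1 hN)).le⟩

lemma ae_forall_eq_zero_of_weight_eq_zero {Ω : Type*} [MeasurableSpace Ω] {P : Measure Ω}
    {R : Set ℕ} {σ : ℕ → ℝ} {X : ℕ → Ω → ℝ} (hX01 : ∀ r ∈ R, ∀ ω, X r ω = 0 ∨ X r ω = 1)
    (hdist : ∀ r ∈ R, P {ω | X r ω = 1} = ENNReal.ofReal (σ r)) :
    ∀ᵐ ω ∂P, ∀ r ∈ R, σ r = 0 → X r ω = 0 := by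
  rw [ae_all_iff]
  intro r
  by_cases hr : r ∈ R ∧ σ r = 0
  · have hnull : P {ω | X r ω = 1} = 0 := by rw [hdist r hr.1, hr.2, ENNReal.ofReal_zero]
    filter_upwards [measure_eq_zero_iff_ae_notMem.1 hnull] with ω hω _ _
    exact (hX01 r hr.1 ω).resolve_right hω
  · exact Eventually.of_forall fun ω h1 h2 => absurd ⟨h1, h2⟩ hr

section RandomSelection

variable {Ω : Type*} [MeasurableSpace Ω] {P : Measure Ω} [IsProbabilityMeasure P]
  {R : Set ℕ} {σ : ℕ → ℝ} {X : ℕ → Ω → ℝ}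

lemma measure_norm_expSum_ge_le (hσ0 : ∀ r ∈ R, 0 ≤ σ r) (hXmeas : ∀ r, Measurable (X r))
    (hX01 : ∀ r ∈ R, ∀ ω, X r ω = 0 ∨ X r ω = 1) (hindep : iIndepFun (fun r : ↥R => X r) P)
    (hdist : ∀ r ∈ R, P {ω | X r ω = 1} = ENNReal.ofReal (σ r)) {N : ℕ} (hN : 2 ≤ N) (β : ℝ) :
    P {ω | 14 * √(Real.log N * (wSum R σ N + Real.log N)) ≤
      ‖expSum (initSeg R N) (fun r => X r ω - σ r) β‖} ≤ ENNReal.ofReal (4 / N ^ 6) := by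
  classical
  set L := Real.log N
  set t := 7 * √(L * (wSum R σ N + L))
  have hL : 0 < L := Real.log_pos (by exact_mod_cast hN)
  have hsum (f : ℕ → ℝ) : ∑ i ∈ (initSeg R N).subtype (· ∈ R), f i = ∑ r ∈ initSeg R N, f r :=
    Finset.sum_subtype_of_mem f fun r hr => (mem_initSeg.1 hr).2
  have htail (a : ℕ → ℝ) (ha : ∀ r, |a r| ≤ 1) :
      P {ω | t ≤ |∑ r ∈ initSeg R N, a r * (X r ω - σ r)|} ≤
        ENNReal.ofReal (2 * Real.exp (-6 * L)) := by
    have := measure_abs_sum_mul_sub_ge_le (P := P) (X := fun i : ↥R => X i) (p := fun i => σ i)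
      (a := fun i => a i) (fun i => hXmeas i) (fun i => hX01 i i.2) (fun i => hσ0 i i.2)
      (fun i => hdist i i.2) hindep (fun i => ha i) ((initSeg R N).subtype (· ∈ R)) hL
    have hsum_a (ω : Ω) := hsum fun r => a r * (X r ω - σ r)
    simp only [hsum_a, hsum σ] at this
    exact this
  have hexp : Real.exp (-6 * L) = 1 / N ^ 6 := by
    rw [show -6 * L = -Real.log (N ^ 6) by rw [Real.log_pow]; push_cast; ring, Real.exp_neg,
      Real.exp_log (by positivity), one_div]
  calc P {ω | 14 * √(L * (wSum R σ N + L)) ≤ ‖expSum (initSeg R N) (fun r => X r ω - σ r) β‖}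
      ≤ P ({ω | t ≤ |∑ r ∈ initSeg R N, Real.cos (2 * Real.pi * (r * β)) * (X r ω - σ r)|} ∪
          {ω | t ≤ |∑ r ∈ initSeg R N, Real.sin (2 * Real.pi * (r * β)) * (X r ω - σ r)|}) := by
        refine measure_mono fun ω hω => ?_
        have := Complex.norm_le_abs_re_add_abs_im (expSum (initSeg R N) (fun r => X r ω - σ r) β)
        rw [expSum_re, expSum_im] at this
        by_contra h
        simp only [Set.mem_union, Set.mem_ofPred_eq, not_or, not_le] at h hω
        linarith
    _ ≤ _ := (measure_union_le _ _).trans (add_le_add (htail _ fun r => Real.abs_cos_le_one _)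
          (htail _ fun r => Real.abs_sin_le_one _))
    _ = ENNReal.ofReal (4 / N ^ 6) := by
        rw [← ENNReal.ofReal_add (by positivity) (by positivity), hexp]
        ring_nf

lemma ae_eventually_norm_expSum_lt (hσ0 : ∀ r ∈ R, 0 ≤ σ r) (hXmeas : ∀ r, Measurable (X r))
    (hX01 : ∀ r ∈ R, ∀ ω, X r ω = 0 ∨ X r ω = 1) (hindep : iIndepFun (fun r : ↥R => X r) P)
    (hdist : ∀ r ∈ R, P {ω | X r ω = 1} = ENNReal.ofReal (σ r)) :
    ∀ᵐ ω ∂P, ∀ᶠ N in atTop, ∀ j : ℕ, j < N ^ 2 →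
      ‖expSum (initSeg R N) (fun r => X r ω - σ r) (j / (N ^ 2 : ℕ))‖ <
        14 * √(Real.log N * (wSum R σ N + Real.log N)) := by
  have hbad : ∀ᶠ N : ℕ in atTop, P (⋃ j ∈ range (N ^ 2),
      {ω | 14 * √(Real.log N * (wSum R σ N + Real.log N)) ≤
        ‖expSum (initSeg R N) (fun r => X r ω - σ r) (j / (N ^ 2 : ℕ))‖}) ≤
      ENNReal.ofReal (4 / N ^ 4) := by
    filter_upwards [eventually_ge_atTop 2] with N hN
    have hN0 : (N : ℝ) ≠ 0 := by positivity
    calc _ ≤ ∑ j ∈ range (N ^ 2), ENNReal.ofReal (4 / N ^ 6) :=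
          (measure_biUnion_finset_le _ _).trans <| Finset.sum_le_sum fun j _ =>
            measure_norm_expSum_ge_le hσ0 hXmeas hX01 hindep hdist hN _
      _ = ENNReal.ofReal (4 / N ^ 4) := by
          rw [Finset.sum_const, Finset.card_range, nsmul_eq_mul, ← ENNReal.ofReal_natCast,
            ← ENNReal.ofReal_mul (by positivity)]
          congr 1
          field_simp
          push_cast
          ring
  have hsummable : Summable fun N : ℕ => 4 / (N : ℝ) ^ 4 := by
    simpa only [div_eq_mul_inv] using (Real.summable_nat_pow_inv.2 (by norm_num)).mul_left 4
  filter_upwards [ae_eventually_notMem_of_summable hsummable hbad] with ω hω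
  filter_upwards [hω] with N hN j hj
  simp only [Set.mem_iUnion, Finset.mem_range, Set.mem_ofPred_eq, not_exists, not_le] at hN
  exact hN j hj

lemma ae_eventually_norm_expSum_le (hσ0 : ∀ r ∈ R, 0 ≤ σ r) (hσ1 : ∀ r ∈ R, σ r ≤ 1)
    (hXmeas : ∀ r, Measurable (X r)) (hX01 : ∀ r ∈ R, ∀ ω, X r ω = 0 ∨ X r ω = 1)
    (hindep : iIndepFun (fun r : ↥R => X r) P)
    (hdist : ∀ r ∈ R, P {ω | X r ω = 1} = ENNReal.ofReal (σ r)) :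
    ∀ᵐ ω ∂P, ∀ᶠ N in atTop, ∀ β,
      ‖expSum (initSeg R N) (fun r => X r ω - σ r) β‖ ≤
        14 * √(Real.log N * (wSum R σ N + Real.log N)) + 2 * Real.pi := by
  filter_upwards [ae_eventually_norm_expSum_lt hσ0 hXmeas hX01 hindep hdist] with ω hω
  filter_upwards [hω, eventually_ge_atTop 1] with N hnet hN β
  have hc : ∀ r ∈ initSeg R N, |X r ω - σ r| ≤ 1 := fun r hr =>
    have hrR := (mem_initSeg.1 hr).2
    abs_sub_le_one_of_zero_or_one (hX01 r hrR ω) (hσ0 r hrR) (hσ1 r hrR)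
  obtain ⟨j, hj, hnear⟩ := exists_norm_expSum_sub_le hc (fun r hr => (mem_initSeg.1 hr).1.2)
    (pow_pos hN 2) β
  have hcard : (#(initSeg R N) : ℝ) ≤ N := by exact_mod_cast card_initSeg_le R N
  have hNpos : (0 : ℝ) < N := by exact_mod_cast hN
  have hdrift : (#(initSeg R N) : ℝ) * (2 * Real.pi * N / (N ^ 2 : ℕ)) ≤ 2 * Real.pi :=
    calc _ ≤ (N : ℝ) * (2 * Real.pi * N / (N ^ 2 : ℕ)) := by gcongr
      _ = 2 * Real.pi := by push_cast; field_simp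
  calc _ ≤ _ := norm_le_insert' _ (expSum (initSeg R N) (fun r => X r ω - σ r) (j / (N ^ 2 : ℕ)))
    _ ≤ _ := add_le_add (hnet j hj).le (hnear.trans hdrift)

end RandomSelection

theorem random_selection_general (R : Set ℕ) (σ : ℕ → ℝ)
    (hσ0 : ∀ r ∈ R, 0 ≤ σ r) (hσ1 : ∀ r ∈ R, σ r ≤ 1)
    (b : ℝ) (hb : 0 < b)
    (hliminf : (b : EReal) <
      Filter.liminf (fun N : ℕ => (((wSum R σ N / Real.log N : ℝ)) : EReal)) atTop)
    {Ω : Type*} [MeasurableSpace Ω] (P : MeasureTheory.Measure Ω)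
    [MeasureTheory.IsProbabilityMeasure P]
    (X : ℕ → Ω → ℝ) (hXmeas : ∀ r, Measurable (X r))
    (hX01 : ∀ r ∈ R, ∀ ω, X r ω = 0 ∨ X r ω = 1)
    (hindep : ProbabilityTheory.iIndepFun
      (fun r : ↥R => X (r : ℕ)) P)
    (hdist : ∀ r ∈ R, P {ω | X r ω = 1} = ENNReal.ofReal (σ r)) :
    ∀ᵐ ω ∂P, ∃ C : ℝ, ∀ N ≥ 2, ∀ β : ℝ,
      ‖∑ r ∈ initSeg R N, ((X r ω - σ r : ℝ) : ℂ) * eC ((r : ℝ) * β)‖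
        ≤ C * Real.sqrt (Real.log N * wSum R σ N) := by
  filter_upwards [ae_eventually_norm_expSum_le hσ0 hσ1 hXmeas hX01 hindep hdist,
    ae_forall_eq_zero_of_weight_eq_zero hX01 hdist] with ω hbound hzero
  refine exists_forall_le_mul_of_eventually (p := (2 ≤ ·))
    (F := fun N β => ‖expSum (initSeg R N) (fun r => X r ω - σ r) β‖)
    (g := fun N => √(Real.log N * wSum R σ N)) (fun N => Real.sqrt_nonneg _)
    (fun N hN => exists_norm_expSum_le_mul_sqrt (fun r hr => hσ0 r (mem_initSeg.1 hr).2)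
      (fun r hr hσr => by rw [hzero r (mem_initSeg.1 hr).2 hσr, hσr, sub_zero])
      (Real.log_pos (by exact_mod_cast hN)))
    (C₀ := 14 * √(1 + b⁻¹) + 2 * Real.pi / √b) ?_
  filter_upwards [hbound, eventually_one_le_log_and_mul_log_le hliminf] with N hN ⟨hL, hV⟩ β
  exact (hN β).trans (mul_sqrt_mul_add_add_le (by norm_num) Real.two_pi_pos.le hb hL hV)

/-- random selection lemma. If `σ : R → [0,1]` satisfies
`liminf_N σ(R(N))/log N > b > 0` and `(X_r)_{r∈R}` are independent Bernoulli variables with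
`P(X_r = 1) = σ(r)`, then almost surely the normalized exponential sums
`max_β |∑_{r∈R(N)} (X_r − σ(r)) e(rβ)| / √(log N · σ(R(N)))` are bounded over `N ≥ 2`. -/
theorem random_selection (R : Set ℕ) (hR : R.Infinite) (σ : ℕ → ℝ)
    (hσ0 : ∀ r ∈ R, 0 ≤ σ r) (hσ1 : ∀ r ∈ R, σ r ≤ 1)
    (b : ℝ) (hb : 0 < b)
    (hliminf : (b : EReal) <
      Filter.liminf (fun N : ℕ => (((wSum R σ N / Real.log N : ℝ)) : EReal)) atTop)
    {Ω : Type*} [MeasurableSpace Ω] (P : MeasureTheory.Measure Ω)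
    [MeasureTheory.IsProbabilityMeasure P]
    (X : ℕ → Ω → ℝ) (hXmeas : ∀ r, Measurable (X r))
    (hX01 : ∀ r ∈ R, ∀ ω, X r ω = 0 ∨ X r ω = 1)
    (hindep : ProbabilityTheory.iIndepFun
      (fun r : ↥R => X (r : ℕ)) P)
    (hdist : ∀ r ∈ R, P {ω | X r ω = 1} = ENNReal.ofReal (σ r)) :
    ∀ᵐ ω ∂P, ∃ C : ℝ, ∀ N ≥ 2, ∀ β : ℝ,
      ‖∑ r ∈ initSeg R N, ((X r ω - σ r : ℝ) : ℂ) * eC ((r : ℝ) * β)‖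
        ≤ C * Real.sqrt (Real.log N * wSum R σ N) :=
  random_selection_general R σ hσ0 hσ1 b hb hliminf P X hXmeas hX01 hindep hdist
end

section
/- Let (X,‖·‖) be a normed space, (x_n) a sequence in X, w : ℕ → ℝ a weight with Σ_{n≤N} w(n) > 0 for all N, and (σ_N) a sequence of finitely supported measures on ℕ, each decreasing (σ_N(1) ≥ σ_N(2) ≥ ⋯ ≥ 0). Set v_N := σ_N·w (i.e. v_N(j) = σ_N(j)w(j)) and assume the sequence (v_N) is dissipative, i.e. v_N(ℕ) > 0 and lim_N v_N(j)/v_N(ℕ) = 0 for each j ∈ ℕ. If the w-weighted averages converge, lim_N (1/Σ_{n≤N} w(n)) Σ_{n≤N} w(n) x_n = y, then also lim_N (1/v_N(ℕ)) Σ_{j∈ℕ} v_N(j) x_j = y. -/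
open MeasureTheory Filter Topology
open scoped BigOperators

lemma abel_aux {X : Type*} [AddCommGroup X] [Module ℝ X] (σ : ℕ → ℝ) (g : ℕ → X) (M : ℕ) :
    ∑ j ∈ Finset.range M, σ j • (g (j+1) - g j) + σ 0 • g 0
      = ∑ j ∈ Finset.range M, (σ j - σ (j+1)) • g (j+1) + σ M • g M := by
  induction M with
  | zero => simp
  | succ M ih =>
      rw [Finset.sum_range_succ, Finset.sum_range_succ, add_right_comm, ih]
      simp only [smul_sub, sub_smul]
      abel

/-- decreasing weights preserve limits. If the `w`-weighted averages of `(x_n)`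
converge to `y` and `(σ_N)` are finitely supported decreasing measures on `ℕ` such that
`v_N = σ_N · w` is dissipative, then the `v_N`-averages also converge to `y`. -/
theorem decreasing_weights_preserve_limits {X : Type*} [NormedAddCommGroup X]
    [NormedSpace ℝ X] (x : ℕ → X) (w : ℕ → ℝ) (hw0 : ∀ n, 0 ≤ w n)
    (hwpos : ∀ N : ℕ, 0 < ∑ n ∈ Finset.range (N + 1), w n)
    (σ : ℕ → ℕ → ℝ) (hσfin : ∀ N, (Function.support (σ N)).Finite)
    (hσ0 : ∀ N j, 0 ≤ σ N j) (hσdec : ∀ N j, σ N (j + 1) ≤ σ N j)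
    (hvpos : ∀ N, 0 < ∑' j, σ N j * w j)
    (hdiss : ∀ j, Tendsto (fun N => σ N j * w j / ∑' i, σ N i * w i) atTop (𝓝 0))
    (y : X)
    (hconv : Tendsto
      (fun N => (∑ n ∈ Finset.range N, w n)⁻¹ • ∑ n ∈ Finset.range N, w n • x n)
      atTop (𝓝 y)) :
    Tendsto (fun N => (∑' j, σ N j * w j)⁻¹ • ∑' j, (σ N j * w j) • x j)
      atTop (𝓝 y) := by
  classical
  set A : ℕ → ℝ := fun m => ∑ n ∈ Finset.range m, w n with hA
  set S : ℕ → X := fun m => ∑ n ∈ Finset.range m, w n • x n with hS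
  set V : ℕ → ℝ := fun N => ∑' j, σ N j * w j with hV
  set y' : ℕ → X := fun m => (A m)⁻¹ • S m with hy'
  have hVpos : ∀ N, 0 < V N := hvpos
  have hAnn : ∀ m, 0 ≤ A m := fun m => Finset.sum_nonneg fun n _ => hw0 n
  have hApos : ∀ m, 0 < A (m + 1) := hwpos
  have hσanti : ∀ N, Antitone (σ N) := fun N => antitone_nat_of_succ_le (hσdec N)
  -- per-N vanishing bound
  have hM : ∀ N, ∃ M, ∀ j, M ≤ j → σ N j = 0 := by
    intro N
    obtain ⟨M, hMub⟩ := (hσfin N).bddAbove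
    refine ⟨M + 1, fun j hj => ?_⟩
    by_contra h
    have : j ≤ M := hMub h
    omega
  -- the coefficients
  set c : ℕ → ℕ → ℝ := fun N j => (σ N j - σ N (j+1)) * A (j+1) / V N with hc
  have hcnn : ∀ N j, 0 ≤ c N j := fun N j =>
    div_nonneg (mul_nonneg (sub_nonneg.2 (hσdec N j)) (hAnn _)) (hVpos N).le
  -- coefficients tend to zero
  have hc0 : ∀ j, Tendsto (fun N => c N j) atTop (𝓝 0) := by
    intro j
    have hub : ∀ N, c N j ≤ ∑ n ∈ Finset.range (j+1), σ N n * w n / V N := by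
      intro N
      rw [← Finset.sum_div]
      simp only [hc]
      apply div_le_div_of_nonneg_right ?_ (hVpos N).le
      calc (σ N j - σ N (j+1)) * A (j+1) ≤ σ N j * A (j+1) :=
            mul_le_mul_of_nonneg_right (by linarith [hσ0 N (j+1)]) (hAnn _)
        _ = ∑ n ∈ Finset.range (j+1), σ N j * w n := by rw [hA, Finset.mul_sum]
        _ ≤ ∑ n ∈ Finset.range (j+1), σ N n * w n := by
            apply Finset.sum_le_sum
            intro n hn
            exact mul_le_mul_of_nonneg_right
              (hσanti N (Nat.le_of_lt_succ (Finset.mem_range.1 hn))) (hw0 n)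
    have hg : Tendsto (fun N => ∑ n ∈ Finset.range (j+1), σ N n * w n / V N) atTop (𝓝 0) := by
      have := tendsto_finset_sum (Finset.range (j+1)) (fun n _ => hdiss n)
      simpa using this
    exact squeeze_zero (fun N => hcnn N j) hub hg
  -- key per-N identities, for any K beyond the support bound
  have key : ∀ N K, (∀ j, K ≤ j → σ N j = 0) →
      (∑ j ∈ Finset.range K, c N j = 1) ∧
      ((V N)⁻¹ • ∑' j, (σ N j * w j) • x j
        = ∑ j ∈ Finset.range K, c N j • y' (j+1)) := by
    intro N K hK
    have hA0 : A 0 = 0 := by simp [hA]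
    have hS0 : S 0 = 0 := by simp [hS]
    have hσK : σ N K = 0 := hK K le_rfl
    -- scalar Abel
    have habelA := abel_aux (σ N) A K
    have hAstep : ∀ j, A (j+1) - A j = w j := by
      intro j; rw [hA]; simp [Finset.sum_range_succ]
    have hVK : V N = ∑ j ∈ Finset.range K, σ N j * w j := by
      rw [hV]
      exact tsum_eq_sum (fun i hi => by
        rw [hK i (le_of_not_gt (fun h => hi (Finset.mem_range.2 h)))]; ring)
    have hVK' : ∑ j ∈ Finset.range K, (σ N j - σ N (j+1)) * A (j+1) = V N := by
      have : ∑ j ∈ Finset.range K, σ N j • (A (j+1) - A j)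
          = ∑ j ∈ Finset.range K, σ N j * w j := by
        apply Finset.sum_congr rfl; intro j _; rw [hAstep j, smul_eq_mul]
      have h2 := habelA
      rw [this, hA0, hσK] at h2
      simp only [smul_eq_mul, mul_zero, zero_mul, add_zero] at h2
      rw [hVK]; exact h2.symm
    constructor
    · simp only [hc, div_eq_mul_inv, ← Finset.sum_mul]
      rw [hVK', mul_inv_cancel₀ (hVpos N).ne']
    · -- vector Abel
      have habelS := abel_aux (σ N) S K
      have hSstep : ∀ j, S (j+1) - S j = w j • x j := by
        intro j; rw [hS]; simp [Finset.sum_range_succ]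
      have hXK : ∑' j, (σ N j * w j) • x j
          = ∑ j ∈ Finset.range K, (σ N j * w j) • x j := by
        exact tsum_eq_sum (fun i hi => by
          rw [hK i (le_of_not_gt (fun h => hi (Finset.mem_range.2 h)))]
          simp)
      have h3 : ∑ j ∈ Finset.range K, σ N j • (S (j+1) - S j)
          = ∑ j ∈ Finset.range K, (σ N j * w j) • x j := by
        apply Finset.sum_congr rfl; intro j _; rw [hSstep j, smul_smul]
      rw [h3, hS0, hσK] at habelS
      simp only [smul_zero, zero_smul, add_zero] at habelS
      rw [hXK, habelS, Finset.smul_sum]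
      apply Finset.sum_congr rfl
      intro j _
      simp only [hc, hy', smul_smul]
      congr 1
      have hA' : A (j+1) ≠ 0 := (hApos j).ne'
      have hV' : V N ≠ 0 := (hVpos N).ne'
      field_simp
  -- now the limit argument
  rw [Metric.tendsto_atTop]
  intro ε hε
  obtain ⟨J, hJ⟩ := (Metric.tendsto_atTop.1 hconv) (ε/2) (by linarith)
  have h1 : Tendsto (fun N => ∑ j ∈ Finset.range J, c N j * ‖y' (j+1) - y‖) atTop (𝓝 0) := by
    have := tendsto_finset_sum (Finset.range J)
      (fun j _ => (hc0 j).mul_const ‖y' (j+1) - y‖)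
    simpa using this
  obtain ⟨N₀, hN₀⟩ := (Metric.tendsto_atTop.1 h1) (ε/2) (by linarith)
  refine ⟨N₀, fun N hN => ?_⟩
  obtain ⟨M, hMz⟩ := hM N
  set K := max M J with hK
  have hKz : ∀ j, K ≤ j → σ N j = 0 := fun j hj => hMz j (le_trans (le_max_left _ _) hj)
  obtain ⟨hsum1, hrepr⟩ := key N K hKz
  have hJK : J ≤ K := le_max_right _ _
  have hdiff : (V N)⁻¹ • (∑' j, (σ N j * w j) • x j) - y
      = ∑ j ∈ Finset.range K, c N j • (y' (j+1) - y) := by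
    rw [hrepr]
    simp only [smul_sub]
    rw [Finset.sum_sub_distrib, ← Finset.sum_smul, hsum1, one_smul]
  rw [dist_eq_norm, hdiff]
  calc ‖∑ j ∈ Finset.range K, c N j • (y' (j+1) - y)‖
      ≤ ∑ j ∈ Finset.range K, c N j * ‖y' (j+1) - y‖ := by
        refine (norm_sum_le _ _).trans_eq ?_
        apply Finset.sum_congr rfl
        intro j _
        rw [norm_smul, Real.norm_of_nonneg (hcnn N j)]
    _ = ∑ j ∈ Finset.range J, c N j * ‖y' (j+1) - y‖
        + ∑ j ∈ Finset.Ico J K, c N j * ‖y' (j+1) - y‖ := by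
        rw [Finset.range_eq_Ico, ← Finset.sum_Ico_consecutive _ (Nat.zero_le J) hJK,
          ← Finset.range_eq_Ico]
    _ < ε/2 + ε/2 := by
        apply add_lt_add_of_lt_of_le
        · have := hN₀ N hN
          rw [Real.dist_eq, sub_zero] at this
          calc ∑ j ∈ Finset.range J, c N j * ‖y' (j+1) - y‖
              ≤ |∑ j ∈ Finset.range J, c N j * ‖y' (j+1) - y‖| := le_abs_self _
            _ < ε/2 := this
        · calc ∑ j ∈ Finset.Ico J K, c N j * ‖y' (j+1) - y‖
              ≤ ∑ j ∈ Finset.Ico J K, c N j * (ε/2) := by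
                apply Finset.sum_le_sum
                intro j hj
                apply mul_le_mul_of_nonneg_left _ (hcnn N j)
                have hj' : J ≤ j + 1 := le_trans (Finset.mem_Ico.1 hj).1 (Nat.le_succ j)
                have := hJ (j+1) hj'
                rw [dist_eq_norm] at this
                exact this.le
            _ = (∑ j ∈ Finset.Ico J K, c N j) * (ε/2) := by rw [Finset.sum_mul]
            _ ≤ 1 * (ε/2) := by
                apply mul_le_mul_of_nonneg_right _ (by linarith)
                rw [← hsum1, Finset.range_eq_Ico]
                apply Finset.sum_le_sum_of_subset_of_nonneg
                · exact Finset.Ico_subset_Ico (Nat.zero_le J) le_rfl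
                · intro j _ _; exact hcnn N j
            _ = ε/2 := one_mul _
    _ = ε := by ring
end

section
/- Let R ⊆ ℕ be infinite with increasing enumeration (r_n), let w be a good weight supported on R (indexed by n), and let σ : ℕ → ℝ be a decreasing nonnegative sequence (σ(1) ≥ σ(2) ≥ ⋯ ≥ 0). Set v := σ·w (i.e. v(n) = σ(n)w(n)) and assume Σ_n v(n) = ∞. Then v is a good weight on R and μ_{v,β} = μ_{w,β} for every β ∈ ℝ. -/
open MeasureTheory Filter Topology
open scoped BigOperators

/-
Write `F_n = f(r_n β)`. Convergence of the `w`-averages of `F` to `L = ∫ f dμ` says that the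
partial sums of `e_n = w_n (F_n - L)` are `o(∑_{n<N} w_n)`. Summation by parts writes
`∑_{n<N} σ_n e_n` as a combination, with the nonnegative coefficients `σ_{N-1}` and
`σ_i - σ_{i+1}`, of these partial sums; the coefficients add up to `σ_0`, so the finitely many
early partial sums contribute a bounded amount, which is negligible against the divergent
`∑_{n<N} σ_n w_n`.
-/

open Finset Asymptotics

section AbelSummation

variable {E : Type*} [SeminormedAddCommGroup E] [NormedSpace ℝ E] {σ : ℕ → ℝ}

theorem norm_sum_range_smul_le_of_antitone (hσ0 : ∀ n, 0 ≤ σ n) (hσ : Antitone σ)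
    {e : ℕ → E} {g : ℕ → ℝ} {K : ℝ}
    (he : ∀ N, ‖∑ n ∈ range N, e n‖ ≤ ∑ n ∈ range N, g n + K) (N : ℕ) :
    ‖∑ n ∈ range N, σ n • e n‖ ≤ ∑ n ∈ range N, σ n * g n + σ 0 * K := by
  have hK : 0 ≤ K := by simpa using (norm_nonneg _).trans (he 0)
  rcases N with _ | N
  · simpa using mul_nonneg (hσ0 0) hK
  have hcoef : ∀ i, 0 ≤ σ i - σ (i + 1) := fun i => sub_nonneg.2 (hσ (Nat.le_succ i))
  have telescope : ∑ i ∈ range N, (σ i - σ (i + 1)) = σ 0 - σ N := sum_range_sub' σ N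
  have parts_g := sum_range_by_parts σ g (N + 1)
  simp only [smul_eq_mul, Nat.add_sub_cancel] at parts_g
  rw [sum_range_by_parts, Nat.add_sub_cancel, parts_g]
  calc ‖σ N • ∑ n ∈ range (N + 1), e n
          - ∑ i ∈ range N, (σ (i + 1) - σ i) • ∑ n ∈ range (i + 1), e n‖
      ≤ σ N * ‖∑ n ∈ range (N + 1), e n‖
          + ∑ i ∈ range N, (σ i - σ (i + 1)) * ‖∑ n ∈ range (i + 1), e n‖ := by
        refine (norm_sub_le _ _).trans (add_le_add ?_ ((norm_sum_le _ _).trans ?_))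
        · rw [norm_smul, Real.norm_of_nonneg (hσ0 N)]
        · refine sum_le_sum fun i _ => ?_
          rw [norm_smul, ← neg_sub, norm_neg, Real.norm_of_nonneg (hcoef i)]
    _ ≤ σ N * (∑ n ∈ range (N + 1), g n + K)
          + ∑ i ∈ range N, (σ i - σ (i + 1)) * (∑ n ∈ range (i + 1), g n + K) := by
        gcongr with i
        · exact hσ0 N
        · exact he _
        · exact hcoef i
        · exact he _
    _ = σ N * ∑ n ∈ range (N + 1), g n
          - ∑ i ∈ range N, (σ (i + 1) - σ i) * ∑ n ∈ range (i + 1), g n + σ 0 * K := by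
        have hflip : ∑ i ∈ range N, (σ i - σ (i + 1)) * ∑ n ∈ range (i + 1), g n
            = -∑ i ∈ range N, (σ (i + 1) - σ i) * ∑ n ∈ range (i + 1), g n := by
          rw [← sum_neg_distrib]
          exact sum_congr rfl fun _ _ => by ring
        rw [sum_congr rfl fun i _ => mul_add (σ i - σ (i + 1)) _ K, sum_add_distrib, ← sum_mul,
          telescope, hflip]
        ring

theorem isLittleO_sum_range_smul_of_antitone (hσ0 : ∀ n, 0 ≤ σ n) (hσ : Antitone σ)
    {e : ℕ → E} {w : ℕ → ℝ} (hw0 : ∀ n, 0 ≤ w n)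
    (hV : Tendsto (fun N => ∑ n ∈ range N, σ n * w n) atTop atTop)
    (he : (fun N => ∑ n ∈ range N, e n) =o[atTop] fun N => ∑ n ∈ range N, w n) :
    (fun N => ∑ n ∈ range N, σ n • e n) =o[atTop] fun N => ∑ n ∈ range N, σ n * w n := by
  rw [isLittleO_iff]
  intro c hc
  obtain ⟨M, hM⟩ := eventually_atTop.1 (he.def (half_pos hc))
  set K := ∑ N ∈ range M, ‖∑ n ∈ range N, e n‖
  have hK : 0 ≤ K := sum_nonneg fun _ _ => norm_nonneg _
  have hW0 : ∀ N, 0 ≤ ∑ n ∈ range N, w n := fun N => sum_nonneg fun n _ => hw0 n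
  have hbound : ∀ N, ‖∑ n ∈ range N, e n‖ ≤ ∑ n ∈ range N, c / 2 * w n + K := by
    intro N
    rw [← mul_sum]
    by_cases hN : N < M
    · have h₁ : ‖∑ n ∈ range N, e n‖ ≤ K :=
        single_le_sum (f := fun N => ‖∑ n ∈ range N, e n‖) (fun _ _ => norm_nonneg _)
          (mem_range.2 hN)
      linarith [mul_nonneg (half_pos hc).le (hW0 N)]
    · have h₁ := hM N (not_lt.1 hN)
      rw [Real.norm_of_nonneg (hW0 N)] at h₁
      linarith
  filter_upwards [(hV.const_mul_atTop (half_pos hc)).eventually_ge_atTop (σ 0 * K)] with N hN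
  have hV0 : 0 ≤ ∑ n ∈ range N, σ n * w n := sum_nonneg fun n _ => mul_nonneg (hσ0 n) (hw0 n)
  calc ‖∑ n ∈ range N, σ n • e n‖
      ≤ ∑ n ∈ range N, σ n * (c / 2 * w n) + σ 0 * K :=
        norm_sum_range_smul_le_of_antitone hσ0 hσ hbound N
    _ ≤ c * ‖∑ n ∈ range N, σ n * w n‖ := by
        rw [Real.norm_of_nonneg hV0]
        have h₁ : ∑ n ∈ range N, σ n * (c / 2 * w n) = c / 2 * ∑ n ∈ range N, σ n * w n := by
          rw [mul_sum]; exact sum_congr rfl fun n _ => by ring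
        linarith

end AbelSummation

theorem tendsto_inv_mul_iff_isLittleO {α : Type*} {l : Filter α} {A W : α → ℝ} {L : ℝ}
    (hW : ∀ᶠ x in l, W x ≠ 0) :
    Tendsto (fun x => (W x)⁻¹ * A x) l (𝓝 L) ↔ (fun x => A x - L * W x) =o[l] W := by
  rw [isLittleO_iff_tendsto' (hW.mono fun x hx h => absurd h hx), ← tendsto_sub_nhds_zero_iff]
  refine tendsto_congr' (hW.mono fun x hx => ?_)
  field_simp

theorem tendsto_weightedAverage_mul_antitone {w σ F : ℕ → ℝ} {L : ℝ} (hw0 : ∀ n, 0 ≤ w n)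
    (hσ0 : ∀ n, 0 ≤ σ n) (hσ : Antitone σ)
    (hV : Tendsto (fun N => ∑ n ∈ range N, σ n * w n) atTop atTop)
    (hlim : Tendsto (fun N => (∑ n ∈ range N, w n)⁻¹ * ∑ n ∈ range N, w n * F n)
      atTop (𝓝 L)) :
    Tendsto (fun N => (∑ n ∈ range N, σ n * w n)⁻¹ * ∑ n ∈ range N, σ n * w n * F n)
      atTop (𝓝 L) := by
  have hσw : ∀ N, ∑ n ∈ range N, σ n * w n ≤ σ 0 * ∑ n ∈ range N, w n := fun N => by
    rw [mul_sum]
    exact sum_le_sum fun n _ => mul_le_mul_of_nonneg_right (hσ (Nat.zero_le n)) (hw0 n)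
  have hW : ∀ᶠ N in atTop, ∑ n ∈ range N, w n ≠ 0 := by
    filter_upwards [hV.eventually_gt_atTop 0] with N hN hW
    have h₁ := hσw N
    rw [hW, mul_zero] at h₁
    linarith
  rw [tendsto_inv_mul_iff_isLittleO hW] at hlim
  rw [tendsto_inv_mul_iff_isLittleO ((hV.eventually_gt_atTop 0).mono fun _ h => h.ne')]
  have key := isLittleO_sum_range_smul_of_antitone hσ0 hσ hw0 hV
    (e := fun n => w n * F n - L * w n) (by simpa only [sum_sub_distrib, mul_sum] using hlim)
  simpa only [smul_eq_mul, mul_sub, sum_sub_distrib, mul_sum, mul_assoc, mul_left_comm]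
    using key

theorem decreasing_weights_preserve_limit_measures_general (R : Set ℕ)
    (w : ℕ → ℝ) (hw : IsGoodWeight R w)
    (σ : ℕ → ℝ) (hσ0 : ∀ n, 0 ≤ σ n) (hσdec : ∀ n, σ (n + 1) ≤ σ n)
    (hv : ¬ Summable (fun n => σ n * w n)) :
    IsGoodWeight R (fun n => σ n * w n) ∧
    ∀ β : ℝ, ∀ μ : MeasureTheory.Measure UnitAddCircle,
      IsWeightLimit R w β μ → IsWeightLimit R (fun n => σ n * w n) β μ := by
  obtain ⟨hw0, -, hw_limits⟩ := hw
  have hv0 : ∀ n, 0 ≤ σ n * w n := fun n => mul_nonneg (hσ0 n) (hw0 n)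
  have hV := (not_summable_iff_tendsto_nat_atTop_of_nonneg hv0).mp hv
  have preserve : ∀ β μ, IsWeightLimit R w β μ → IsWeightLimit R (fun n => σ n * w n) β μ :=
    fun β μ hμ f =>
      tendsto_weightedAverage_mul_antitone hw0 hσ0 (antitone_nat_of_succ_le hσdec) hV (hμ f)
  refine ⟨⟨hv0, hv, fun β => ?_⟩, preserve⟩
  obtain ⟨μ, hμ, hlim⟩ := hw_limits β
  exact ⟨μ, hμ, preserve β μ hlim⟩

/-- multiplying a good weight on `R` by a decreasing nonnegative sequence with
divergent weighted sums yields a good weight representing the same measures everywhere. -/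
theorem decreasing_weights_preserve_limit_measures (R : Set ℕ) (hR : R.Infinite)
    (w : ℕ → ℝ) (hw : IsGoodWeight R w)
    (σ : ℕ → ℝ) (hσ0 : ∀ n, 0 ≤ σ n) (hσdec : ∀ n, σ (n + 1) ≤ σ n)
    (hv : ¬ Summable (fun n => σ n * w n)) :
    IsGoodWeight R (fun n => σ n * w n) ∧
    ∀ β : ℝ, ∀ μ : MeasureTheory.Measure UnitAddCircle,
      IsWeightLimit R w β μ → IsWeightLimit R (fun n => σ n * w n) β μ :=
  decreasing_weights_preserve_limit_measures_general R w hw σ hσ0 hσdec hv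
end
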